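/- arXiv:math/0204334 — 3 statements merged into one kernel-verified Lean document; each statement's English description precedes it below -/
import Mathlib

section
/- Let m be a nonnegative integer and a, b real numbers with b > 0 and a > (m/2)·b, and let m' be a nonnegative integer and a', b' real numbers with b' > 0 and a' > (m'/2)·b'. Assume that b, b', a − (m/2)·b, and a' − (m'/2)·b' are all integers. If there exists T ∈ GL(3,ℤ) such that T(C(a,b,m)) = C(a',b',m'), then either (a,b,m) = (a',b',m'), or else m = m' = 0 and a = b', b = a'. -/
open Set

noncomputable section

/-- The standard Hirzebruch trapezoid `Δ(a,b,m) ⊆ ℝ²`: the convex hull of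
`(0,0)`, `(0,b)`, `(a − (m/2)b, b)`, `(a + (m/2)b, 0)`. -/
def hirzTrap (a b : ℝ) (m : ℕ) : Set (ℝ × ℝ) :=
  convexHull ℝ {((0:ℝ), (0:ℝ)), ((0:ℝ), b), (a - (m:ℝ)/2*b, b), (a + (m:ℝ)/2*b, (0:ℝ))}

/-- The standard Hirzebruch cone `C(a,b,m) ⊆ ℝ³`, the cone on `Δ(a,b,m)`. -/
def hirzCone (a b : ℝ) (m : ℕ) : Set (ℝ × ℝ × ℝ) :=
  {p : ℝ × ℝ × ℝ | ∃ t : ℝ, 0 ≤ t ∧ ∃ q ∈ hirzTrap a b m, p = (t * q.1, t * q.2, t)}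

/-- The integer lattice `ℤ³` sitting inside `ℝ³`. -/
def intLattice3 : Set (ℝ × ℝ × ℝ) :=
  {p : ℝ × ℝ × ℝ | ∃ k : ℤ × ℤ × ℤ, p = ((k.1 : ℝ), (k.2.1 : ℝ), (k.2.2 : ℝ))}

/-- Inclusion of `ℤ³` into `ℝ³`. -/
def castVec3 (w : ℤ × ℤ × ℤ) : ℝ × ℝ × ℝ := ((w.1 : ℝ), (w.2.1 : ℝ), (w.2.2 : ℝ))

/-- A vector of `ℤ³` is primitive if it is not a `k`-fold multiple, `k` a positive
integer, of a lattice vector unless `k = 1`. -/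
def IsPrimitive3 (w : ℤ × ℤ × ℤ) : Prop :=
  ∀ (k : ℤ) (u : ℤ × ℤ × ℤ), 0 < k → w = k • u → k = 1

def Cgen (w0 w1 w2 w3 : ℝ × ℝ × ℝ) : Set (ℝ × ℝ × ℝ) :=
  {p | ∃ t0 t1 t2 t3 : ℝ, 0 ≤ t0 ∧ 0 ≤ t1 ∧ 0 ≤ t2 ∧ 0 ≤ t3 ∧
    p = t0 • w0 + t1 • w1 + t2 • w2 + t3 • w3}

lemma smul_triple (z x y w : ℝ) : z • ((x, y, w) : ℝ × ℝ × ℝ) = (z*x, z*y, z*w) := rfl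

lemma add_triple (x y w x' y' w' : ℝ) :
    ((x, y, w) : ℝ × ℝ × ℝ) + (x', y', w') = (x+x', y+y', w+w') := rfl

lemma triple_ext {p q : ℝ × ℝ × ℝ} (h1 : p.1 = q.1) (h2 : p.2.1 = q.2.1)
    (h3 : p.2.2 = q.2.2) : p = q := by
  obtain ⟨a, b, c⟩ := p; obtain ⟨a', b', c'⟩ := q
  simp_all

lemma eq_of_int_ratio {x y : ℝ} (hx : 0 < x) (hy : 0 < y)
    (h1 : ∃ k : ℤ, x = k * y) (h2 : ∃ l : ℤ, y = l * x) : x = y := by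
  obtain ⟨k, hk⟩ := h1
  obtain ⟨l, hl⟩ := h2
  have hkpos : 0 < (k : ℝ) := by nlinarith
  have hlpos : 0 < (l : ℝ) := by nlinarith
  have hk1 : (1:ℝ) ≤ (k:ℝ) := by exact_mod_cast (by exact_mod_cast hkpos : 0 < k)
  have hl1 : (1:ℝ) ≤ (l:ℝ) := by exact_mod_cast (by exact_mod_cast hlpos : 0 < l)
  nlinarith

lemma comp_int {x y : ℝ} (hy : y ≠ 0) {c : ℝ} {k : ℤ} (hc : c = 1 ∨ c = -1)
    (h : (y⁻¹ * x) * c = (k : ℝ)) : ∃ n : ℤ, x = n * y := by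
  rcases hc with rfl | rfl
  · exact ⟨k, by field_simp at h; linarith⟩
  · refine ⟨-k, ?_⟩
    push_cast
    field_simp at h
    linarith

lemma edge_eq (T : (ℝ × ℝ × ℝ) ≃ₗ[ℝ] ℝ × ℝ × ℝ)
    (hTf : ∀ p ∈ intLattice3, T p ∈ intLattice3)
    (hTb : ∀ p ∈ intLattice3, T.symm p ∈ intLattice3)
    {x y : ℝ} (hx : 0 < x) (hy : 0 < y)
    (e e' : ℝ × ℝ × ℝ) (he : e ∈ intLattice3) (he' : e' ∈ intLattice3)
    (hue : e.1 = 1 ∨ e.1 = -1 ∨ e.2.1 = 1 ∨ e.2.1 = -1)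
    (hue' : e'.1 = 1 ∨ e'.1 = -1 ∨ e'.2.1 = 1 ∨ e'.2.1 = -1)
    (h : T (x • e) = y • e') : x = y := by
  have hx' : x ≠ 0 := ne_of_gt hx
  have hy' : y ≠ 0 := ne_of_gt hy
  have hTe : T e = (x⁻¹ * y) • e' := by
    have h1 : x • T e = y • e' := by rw [← map_smul]; exact h
    calc T e = x⁻¹ • (x • T e) := by rw [smul_smul, inv_mul_cancel₀ hx', one_smul]
    _ = x⁻¹ • (y • e') := by rw [h1]
    _ = (x⁻¹ * y) • e' := by rw [smul_smul]
  have hTe' : T.symm e' = (y⁻¹ * x) • e := by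
    have h2 : T.symm (y • e') = x • e := by rw [← h]; simp
    have h1 : y • T.symm e' = x • e := by rw [← map_smul]; exact h2
    calc T.symm e' = y⁻¹ • (y • T.symm e') := by
          rw [smul_smul, inv_mul_cancel₀ hy', one_smul]
    _ = y⁻¹ • (x • e) := by rw [h1]
    _ = (y⁻¹ * x) • e := by rw [smul_smul]
  obtain ⟨k, hk⟩ := hTf e he
  rw [hTe] at hk
  obtain ⟨l, hl⟩ := hTb e' he'
  rw [hTe'] at hl
  apply eq_of_int_ratio hx hy
  · rcases hue with h1 | h1 | h1 | h1
    · exact comp_int hy' (Or.inl h1) (by have := congrArg Prod.fst hl; simpa using this)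
    · exact comp_int hy' (Or.inr h1) (by have := congrArg Prod.fst hl; simpa using this)
    · exact comp_int hy' (Or.inl h1) (by have := congrArg (fun p : ℝ×ℝ×ℝ => p.2.1) hl; simpa using this)
    · exact comp_int hy' (Or.inr h1) (by have := congrArg (fun p : ℝ×ℝ×ℝ => p.2.1) hl; simpa using this)
  · rcases hue' with h1 | h1 | h1 | h1
    · exact comp_int hx' (Or.inl h1) (by have := congrArg Prod.fst hk; simpa using this)
    · exact comp_int hx' (Or.inr h1) (by have := congrArg Prod.fst hk; simpa using this)
    · exact comp_int hx' (Or.inl h1) (by have := congrArg (fun p : ℝ×ℝ×ℝ => p.2.1) hk; simpa using this)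
    · exact comp_int hx' (Or.inr h1) (by have := congrArg (fun p : ℝ×ℝ×ℝ => p.2.1) hk; simpa using this)

lemma hirzTrap_subset_K (a b : ℝ) (m : ℕ) :
    hirzTrap a b m ⊆ {q : ℝ × ℝ | ∃ l1 l2 l3 : ℝ, 0 ≤ l1 ∧ 0 ≤ l2 ∧ 0 ≤ l3 ∧
      l1 + l2 + l3 ≤ 1 ∧
      q = (l2 * (a - (m:ℝ)/2*b) + l3 * (a + (m:ℝ)/2*b), (l1 + l2) * b)} := by
  apply convexHull_min
  · intro q hq
    simp only [mem_insert_iff, mem_singleton_iff] at hq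
    rcases hq with rfl | rfl | rfl | rfl
    · exact ⟨0, 0, 0, le_refl _, le_refl _, le_refl _, by norm_num, by norm_num⟩
    · exact ⟨1, 0, 0, by norm_num, le_refl _, le_refl _, by norm_num, by norm_num⟩
    · exact ⟨0, 1, 0, le_refl _, by norm_num, le_refl _, by norm_num, by norm_num⟩
    · exact ⟨0, 0, 1, le_refl _, le_refl _, by norm_num, by norm_num, by norm_num⟩
  · rintro p ⟨l1, l2, l3, hl1, hl2, hl3, hls, rfl⟩ q ⟨n1, n2, n3, hn1, hn2, hn3, hns, rfl⟩
      s t hs ht hst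
    refine ⟨s*l1 + t*n1, s*l2 + t*n2, s*l3 + t*n3,
      by positivity, by positivity, by positivity, by nlinarith, ?_⟩
    have : s • ((l2 * (a - (m:ℝ)/2*b) + l3 * (a + (m:ℝ)/2*b), (l1 + l2) * b) : ℝ × ℝ)
        + t • ((n2 * (a - (m:ℝ)/2*b) + n3 * (a + (m:ℝ)/2*b), (n1 + n2) * b) : ℝ × ℝ)
        = (s*(l2 * (a - (m:ℝ)/2*b) + l3 * (a + (m:ℝ)/2*b)) + t*(n2 * (a - (m:ℝ)/2*b) + n3 * (a + (m:ℝ)/2*b)),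
           s*((l1 + l2) * b) + t*((n1 + n2) * b)) := rfl
    rw [this]
    rw [Prod.mk.injEq]
    constructor <;> ring


lemma combo4 (t0 t1 t2 t3 x0 y0 z0 x1 y1 z1 x2 y2 z2 x3 y3 z3 : ℝ) :
    t0 • ((x0,y0,z0) : ℝ×ℝ×ℝ) + t1 • (x1,y1,z1) + t2 • (x2,y2,z2) + t3 • (x3,y3,z3)
    = (t0*x0+t1*x1+t2*x2+t3*x3, t0*y0+t1*y1+t2*y2+t3*y3, t0*z0+t1*z1+t2*z2+t3*z3) := rfl

lemma hirzCone_eq_Cgen (a b : ℝ) (m : ℕ) :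
    hirzCone a b m = Cgen ((0:ℝ),(0:ℝ),(1:ℝ)) (0, b, 1)
      (a - (m:ℝ)/2*b, b, 1) (a + (m:ℝ)/2*b, 0, 1) := by
  ext p
  constructor
  · rintro ⟨t, ht, q, hq, rfl⟩
    obtain ⟨l1, l2, l3, hl1, hl2, hl3, hls, hqe⟩ := hirzTrap_subset_K a b m hq
    refine ⟨t*(1 - l1 - l2 - l3), t*l1, t*l2, t*l3,
      mul_nonneg ht (by linarith), mul_nonneg ht hl1, mul_nonneg ht hl2,
      mul_nonneg ht hl3, ?_⟩
    have h1 : q.1 = l2 * (a - (m:ℝ)/2*b) + l3 * (a + (m:ℝ)/2*b) := by rw [hqe]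
    have h2 : q.2 = (l1 + l2) * b := by rw [hqe]
    rw [h1, h2, combo4, Prod.mk.injEq, Prod.mk.injEq]
    refine ⟨by ring, by ring, by ring⟩
  · rintro ⟨t0, t1, t2, t3, h0, h1, h2, h3, rfl⟩
    by_cases hs : t0 + t1 + t2 + t3 = 0
    · have e0 : t0 = 0 := by linarith
      have e1 : t1 = 0 := by linarith
      have e2 : t2 = 0 := by linarith
      have e3 : t3 = 0 := by linarith
      subst e0 e1 e2 e3
      refine ⟨0, le_refl _, ((0:ℝ),(0:ℝ)), ?_, ?_⟩
      · exact subset_convexHull ℝ _ (Set.mem_insert _ _)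
      · rw [combo4, Prod.mk.injEq, Prod.mk.injEq]; norm_num
    · have hsp : 0 < t0 + t1 + t2 + t3 := lt_of_le_of_ne (by linarith) (Ne.symm hs)
      have hsne : t0 + t1 + t2 + t3 ≠ 0 := hs
      refine ⟨t0 + t1 + t2 + t3, hsp.le,
        ((t2*(a - (m:ℝ)/2*b) + t3*(a + (m:ℝ)/2*b))/(t0+t1+t2+t3),
         ((t1+t2)*b)/(t0+t1+t2+t3)), ?_, ?_⟩
      · have hw0 : ∀ i ∈ (Finset.univ : Finset (Fin 4)), 0 ≤
            (![t0/(t0+t1+t2+t3), t1/(t0+t1+t2+t3), t2/(t0+t1+t2+t3), t3/(t0+t1+t2+t3)]) i := by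
          intro i _
          fin_cases i <;> exact div_nonneg (by assumption) hsp.le
        have hws : (∑ i, (![t0/(t0+t1+t2+t3), t1/(t0+t1+t2+t3), t2/(t0+t1+t2+t3), t3/(t0+t1+t2+t3)]) i) = 1 := by
          simp only [Fin.sum_univ_four, Matrix.cons_val_zero, Matrix.cons_val_one,
            Matrix.head_cons, Matrix.cons_val_two, Matrix.tail_cons, Matrix.cons_val_three]
          field_simp
        have hcm := Finset.centerMass_mem_convexHull (t := (Finset.univ : Finset (Fin 4)))
          (w := ![t0/(t0+t1+t2+t3), t1/(t0+t1+t2+t3), t2/(t0+t1+t2+t3), t3/(t0+t1+t2+t3)])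
          (z := ![((0:ℝ),(0:ℝ)), ((0:ℝ), b), (a - (m:ℝ)/2*b, b), (a + (m:ℝ)/2*b, (0:ℝ))])
          (s := {((0:ℝ), (0:ℝ)), ((0:ℝ), b), (a - (m:ℝ)/2*b, b), (a + (m:ℝ)/2*b, (0:ℝ))})
          hw0 (by rw [hws]; norm_num)
          (by intro i _; fin_cases i <;> simp [mem_insert_iff])
        rw [Finset.centerMass_eq_of_sum_1 _ _ hws] at hcm
        simp only [Fin.sum_univ_four, Matrix.cons_val_zero, Matrix.cons_val_one,
          Matrix.head_cons, Matrix.cons_val_two, Matrix.tail_cons, Matrix.cons_val_three] at hcm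
        have hpair : (t0/(t0+t1+t2+t3)) • ((0:ℝ),(0:ℝ)) + (t1/(t0+t1+t2+t3)) • ((0:ℝ), b)
            + (t2/(t0+t1+t2+t3)) • (a - (m:ℝ)/2*b, b) + (t3/(t0+t1+t2+t3)) • (a + (m:ℝ)/2*b, (0:ℝ))
            = (((t2*(a - (m:ℝ)/2*b) + t3*(a + (m:ℝ)/2*b))/(t0+t1+t2+t3),
               ((t1+t2)*b)/(t0+t1+t2+t3)) : ℝ × ℝ) := by
          show ((t0/(t0+t1+t2+t3)) * 0 + (t1/(t0+t1+t2+t3)) * 0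
              + (t2/(t0+t1+t2+t3)) * (a - (m:ℝ)/2*b) + (t3/(t0+t1+t2+t3)) * (a + (m:ℝ)/2*b),
              (t0/(t0+t1+t2+t3)) * 0 + (t1/(t0+t1+t2+t3)) * b
              + (t2/(t0+t1+t2+t3)) * b + (t3/(t0+t1+t2+t3)) * 0) = _
          rw [Prod.mk.injEq]
          constructor
          · field_simp
            try ring
            try exact Or.inl trivial
          · field_simp
            try ring
            try exact Or.inl trivial
        rw [hpair] at hcm
        exact hcm
      · have hc : ∀ X : ℝ, (t0+t1+t2+t3) * (X/(t0+t1+t2+t3)) = X := fun X => by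
          rw [mul_comm, div_mul_cancel₀ _ hsne]
        rw [combo4]
        refine triple_ext ?_ ?_ ?_
        · show t0*0+t1*0+t2*(a-(m:ℝ)/2*b)+t3*(a+(m:ℝ)/2*b) = (t0+t1+t2+t3) * _
          rw [hc]
          ring
        · show t0*0+t1*b+t2*b+t3*0 = (t0+t1+t2+t3) * _
          rw [hc]
          ring
        · show t0*1+t1*1+t2*1+t3*1 = _
          ring

def Hset (P Q b : ℝ) : Set (ℝ × ℝ × ℝ) :=
  {p | 0 ≤ p.1 ∧ 0 ≤ p.2.1 ∧ p.2.1 ≤ b * p.2.2 ∧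
    b * p.1 + (Q - P) * p.2.1 ≤ Q * b * p.2.2}

lemma Cgen_eq_Hset (P Q b : ℝ) (hb : 0 < b) (hP : 0 < P) (hPQ : P ≤ Q) :
    Cgen ((0:ℝ),(0:ℝ),(1:ℝ)) (0, b, 1) (P, b, 1) (Q, 0, 1) = Hset P Q b := by
  have hQ : 0 < Q := lt_of_lt_of_le hP hPQ
  ext p
  constructor
  · rintro ⟨t0, t1, t2, t3, h0, h1, h2, h3, rfl⟩
    rw [combo4]
    refine ⟨?_, ?_, ?_, ?_⟩
    · show 0 ≤ t0*0+t1*0+t2*P+t3*Q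
      nlinarith
    · show 0 ≤ t0*0+t1*b+t2*b+t3*0
      nlinarith
    · show t0*0+t1*b+t2*b+t3*0 ≤ b * (t0*1+t1*1+t2*1+t3*1)
      nlinarith
    · show b * (t0*0+t1*0+t2*P+t3*Q) + (Q-P) * (t0*0+t1*b+t2*b+t3*0)
        ≤ Q * b * (t0*1+t1*1+t2*1+t3*1)
      nlinarith [mul_nonneg (mul_nonneg hb.le hQ.le) h0, mul_nonneg (mul_nonneg hb.le hP.le) h1]
  · rintro ⟨hx, hy, hyz, hlast⟩
    obtain ⟨x, y, z⟩ := p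
    simp only at hx hy hyz hlast
    have hbne : b ≠ 0 := ne_of_gt hb
    set s : ℝ := y / b with hs
    have hs0 : 0 ≤ s := div_nonneg hy hb.le
    have hsb : s * b = y := by rw [hs]; field_simp
    have hsz : s ≤ z := by
      rw [hs, div_le_iff₀ hb]
      nlinarith
    have hz0 : 0 ≤ z := le_trans hs0 hsz
    set D : ℝ := Q * (z - s) + P * s with hD
    have hD0 : 0 ≤ D := by nlinarith
    have hxD : x ≤ D := by
      have : b * x ≤ b * D := by
        rw [hD]
        nlinarith
      nlinarith
    set r : ℝ := x / D with hr
    have hr0 : 0 ≤ r := div_nonneg hx hD0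
    have hrD : r * D = x := by
      by_cases hDz : D = 0
      · rw [hr, hDz]
        simp
        linarith [hxD, hx, hDz ▸ hxD]
      · rw [hr]; field_simp
    have hr1 : r ≤ 1 := by
      by_cases hDz : D = 0
      · rw [hr, hDz]; simp
      · rw [hr, div_le_one (lt_of_le_of_ne hD0 (Ne.symm hDz))]
        exact hxD
    refine ⟨(z-s)*(1-r), s*(1-r), s*r, (z-s)*r,
      mul_nonneg (by linarith) (by linarith), mul_nonneg hs0 (by linarith),
      mul_nonneg hs0 hr0, mul_nonneg (by linarith) hr0, ?_⟩
    rw [combo4]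
    refine triple_ext ?_ ?_ ?_ <;> simp only
    · show x = (z-s)*(1-r)*0 + s*(1-r)*0 + s*r*P + (z-s)*r*Q
      have : s*r*P + (z-s)*r*Q = r * D := by rw [hD]; ring
      rw [← hrD] at *
      linarith [this]
    · show y = (z-s)*(1-r)*0 + s*(1-r)*b + s*r*b + (z-s)*r*0
      have : (z-s)*(1-r)*0 + s*(1-r)*b + s*r*b + (z-s)*r*0 = s * b := by ring
      rw [this, hsb]
    · show z = (z-s)*(1-r)*1 + s*(1-r)*1 + s*r*1 + (z-s)*r*1
      ring

lemma mem_Cgen_0 (w0 w1 w2 w3 : ℝ × ℝ × ℝ) : w0 ∈ Cgen w0 w1 w2 w3 :=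
  ⟨1, 0, 0, 0, by norm_num, by norm_num, by norm_num, by norm_num, by
    simp⟩

lemma mem_Cgen_1 (w0 w1 w2 w3 : ℝ × ℝ × ℝ) : w1 ∈ Cgen w0 w1 w2 w3 :=
  ⟨0, 1, 0, 0, by norm_num, by norm_num, by norm_num, by norm_num, by simp⟩

lemma mem_Cgen_2 (w0 w1 w2 w3 : ℝ × ℝ × ℝ) : w2 ∈ Cgen w0 w1 w2 w3 :=
  ⟨0, 0, 1, 0, by norm_num, by norm_num, by norm_num, by norm_num, by simp⟩

lemma mem_Cgen_3 (w0 w1 w2 w3 : ℝ × ℝ × ℝ) : w3 ∈ Cgen w0 w1 w2 w3 :=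
  ⟨0, 0, 0, 1, by norm_num, by norm_num, by norm_num, by norm_num, by simp⟩

lemma extract (α β γ α' β' γ' : ℝ) (w0 w1 w2 w3 v : ℝ × ℝ × ℝ) (S : Set (ℝ × ℝ × ℝ))
    (hEq : Cgen w0 w1 w2 w3 = S)
    (hf : ∀ p ∈ S, 0 ≤ α * p.1 + β * p.2.1 + γ * p.2.2)
    (hg : ∀ p ∈ S, 0 ≤ α' * p.1 + β' * p.2.1 + γ' * p.2.2)
    (hv : v ∈ S) (hvz : v.2.2 = 1)
    (hfv : α * v.1 + β * v.2.1 + γ * v.2.2 = 0)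
    (hgv : α' * v.1 + β' * v.2.1 + γ' * v.2.2 = 0)
    (hray : ∀ p ∈ S, α * p.1 + β * p.2.1 + γ * p.2.2 = 0 →
       α' * p.1 + β' * p.2.1 + γ' * p.2.2 = 0 → p.2.2 ≠ 0 → ∃ z : ℝ, 0 ≤ z ∧ p = z • v) :
    ∃ z : ℝ, 0 < z ∧ (w0 = z • v ∨ w1 = z • v ∨ w2 = z • v ∨ w3 = z • v) := by
  have hw0 : w0 ∈ S := hEq ▸ mem_Cgen_0 w0 w1 w2 w3
  have hw1 : w1 ∈ S := hEq ▸ mem_Cgen_1 w0 w1 w2 w3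
  have hw2 : w2 ∈ S := hEq ▸ mem_Cgen_2 w0 w1 w2 w3
  have hw3 : w3 ∈ S := hEq ▸ mem_Cgen_3 w0 w1 w2 w3
  rw [← hEq] at hv
  obtain ⟨t0, t1, t2, t3, h0, h1, h2, h3, hsum⟩ := hv
  have e1 : v.1 = t0*w0.1 + t1*w1.1 + t2*w2.1 + t3*w3.1 := by
    rw [hsum]; rfl
  have e2 : v.2.1 = t0*w0.2.1 + t1*w1.2.1 + t2*w2.2.1 + t3*w3.2.1 := by
    rw [hsum]; rfl
  have e3 : v.2.2 = t0*w0.2.2 + t1*w1.2.2 + t2*w2.2.2 + t3*w3.2.2 := by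
    rw [hsum]; rfl
  have hF0 := hf w0 hw0; have hF1 := hf w1 hw1; have hF2 := hf w2 hw2; have hF3 := hf w3 hw3
  have hG0 := hg w0 hw0; have hG1 := hg w1 hw1; have hG2 := hg w2 hw2; have hG3 := hg w3 hw3
  have hsumf : t0*(α*w0.1+β*w0.2.1+γ*w0.2.2) + t1*(α*w1.1+β*w1.2.1+γ*w1.2.2)
      + t2*(α*w2.1+β*w2.2.1+γ*w2.2.2) + t3*(α*w3.1+β*w3.2.1+γ*w3.2.2) = 0 := by
    rw [e1, e2, e3] at hfv; linear_combination hfv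
  have hsumg : t0*(α'*w0.1+β'*w0.2.1+γ'*w0.2.2) + t1*(α'*w1.1+β'*w1.2.1+γ'*w1.2.2)
      + t2*(α'*w2.1+β'*w2.2.1+γ'*w2.2.2) + t3*(α'*w3.1+β'*w3.2.1+γ'*w3.2.2) = 0 := by
    rw [e1, e2, e3] at hgv; linear_combination hgv
  have hFz : ∀ i, i = 0 → True := fun _ _ => trivial
  have hT0 : t0*(α*w0.1+β*w0.2.1+γ*w0.2.2) = 0 := by
    linarith [mul_nonneg h0 hF0, mul_nonneg h1 hF1, mul_nonneg h2 hF2, mul_nonneg h3 hF3]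
  have hT1 : t1*(α*w1.1+β*w1.2.1+γ*w1.2.2) = 0 := by
    linarith [mul_nonneg h0 hF0, mul_nonneg h1 hF1, mul_nonneg h2 hF2, mul_nonneg h3 hF3]
  have hT2 : t2*(α*w2.1+β*w2.2.1+γ*w2.2.2) = 0 := by
    linarith [mul_nonneg h0 hF0, mul_nonneg h1 hF1, mul_nonneg h2 hF2, mul_nonneg h3 hF3]
  have hT3 : t3*(α*w3.1+β*w3.2.1+γ*w3.2.2) = 0 := by
    linarith [mul_nonneg h0 hF0, mul_nonneg h1 hF1, mul_nonneg h2 hF2, mul_nonneg h3 hF3]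
  have hU0 : t0*(α'*w0.1+β'*w0.2.1+γ'*w0.2.2) = 0 := by
    linarith [mul_nonneg h0 hG0, mul_nonneg h1 hG1, mul_nonneg h2 hG2, mul_nonneg h3 hG3]
  have hU1 : t1*(α'*w1.1+β'*w1.2.1+γ'*w1.2.2) = 0 := by
    linarith [mul_nonneg h0 hG0, mul_nonneg h1 hG1, mul_nonneg h2 hG2, mul_nonneg h3 hG3]
  have hU2 : t2*(α'*w2.1+β'*w2.2.1+γ'*w2.2.2) = 0 := by
    linarith [mul_nonneg h0 hG0, mul_nonneg h1 hG1, mul_nonneg h2 hG2, mul_nonneg h3 hG3]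
  have hU3 : t3*(α'*w3.1+β'*w3.2.1+γ'*w3.2.2) = 0 := by
    linarith [mul_nonneg h0 hG0, mul_nonneg h1 hG1, mul_nonneg h2 hG2, mul_nonneg h3 hG3]
  have hz1 : t0*w0.2.2 + t1*w1.2.2 + t2*w2.2.2 + t3*w3.2.2 = 1 := by
    rw [← e3, hvz]
  have hex : t0*w0.2.2 ≠ 0 ∨ t1*w1.2.2 ≠ 0 ∨ t2*w2.2.2 ≠ 0 ∨ t3*w3.2.2 ≠ 0 := by
    by_contra hcon
    push_neg at hcon
    obtain ⟨c0, c1, c2, c3⟩ := hcon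
    rw [c0, c1, c2, c3] at hz1
    norm_num at hz1
  have main : ∀ (w : ℝ × ℝ × ℝ), w ∈ S → ∀ t : ℝ, 0 ≤ t →
      t*(α*w.1+β*w.2.1+γ*w.2.2) = 0 → t*(α'*w.1+β'*w.2.1+γ'*w.2.2) = 0 →
      t*w.2.2 ≠ 0 → ∃ z : ℝ, 0 < z ∧ w = z • v := by
    intro w hw t ht hA hB hne
    have htne : t ≠ 0 := fun h => hne (by rw [h]; ring)
    have hwz : w.2.2 ≠ 0 := fun h => hne (by rw [h]; ring)
    have hA' : α*w.1+β*w.2.1+γ*w.2.2 = 0 := by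
      rcases mul_eq_zero.mp hA with h | h
      · exact absurd h htne
      · exact h
    have hB' : α'*w.1+β'*w.2.1+γ'*w.2.2 = 0 := by
      rcases mul_eq_zero.mp hB with h | h
      · exact absurd h htne
      · exact h
    obtain ⟨z, hz0, hzw⟩ := hray w hw hA' hB' hwz
    have : w.2.2 = z * v.2.2 := by rw [hzw]; rfl
    rw [hvz, mul_one] at this
    have hzne : z ≠ 0 := fun h => hwz (by rw [this, h])
    exact ⟨z, lt_of_le_of_ne hz0 (Ne.symm hzne), hzw⟩
  rcases hex with h | h | h | h
  · obtain ⟨z, hz, he⟩ := main w0 hw0 t0 h0 hT0 hU0 h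
    exact ⟨z, hz, Or.inl he⟩
  · obtain ⟨z, hz, he⟩ := main w1 hw1 t1 h1 hT1 hU1 h
    exact ⟨z, hz, Or.inr (Or.inl he)⟩
  · obtain ⟨z, hz, he⟩ := main w2 hw2 t2 h2 hT2 hU2 h
    exact ⟨z, hz, Or.inr (Or.inr (Or.inl he))⟩
  · obtain ⟨z, hz, he⟩ := main w3 hw3 t3 h3 hT3 hU3 h
    exact ⟨z, hz, Or.inr (Or.inr (Or.inr he))⟩

lemma triple_sub (x y z x' y' z' : ℝ) :
    ((x,y,z) : ℝ×ℝ×ℝ) - (x',y',z') = (x-x', y-y', z-z') := rfl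

lemma Cgen_image (T : (ℝ×ℝ×ℝ) ≃ₗ[ℝ] ℝ×ℝ×ℝ) (w0 w1 w2 w3 : ℝ×ℝ×ℝ) :
    T '' Cgen w0 w1 w2 w3 = Cgen (T w0) (T w1) (T w2) (T w3) := by
  ext p
  constructor
  · rintro ⟨q, ⟨t0,t1,t2,t3,h0,h1,h2,h3,rfl⟩, rfl⟩
    exact ⟨t0,t1,t2,t3,h0,h1,h2,h3, by simp [map_add, map_smul]⟩
  · rintro ⟨t0,t1,t2,t3,h0,h1,h2,h3,rfl⟩
    exact ⟨t0 • w0 + t1 • w1 + t2 • w2 + t3 • w3, ⟨t0,t1,t2,t3,h0,h1,h2,h3,rfl⟩,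
      by simp [map_add, map_smul]⟩

lemma scale_one (T : (ℝ×ℝ×ℝ) ≃ₗ[ℝ] ℝ×ℝ×ℝ)
    (hTf : ∀ p ∈ intLattice3, T p ∈ intLattice3)
    (hTb : ∀ p ∈ intLattice3, T.symm p ∈ intLattice3)
    (u v : ℝ×ℝ×ℝ) (hu : u ∈ intLattice3) (hv : v ∈ intLattice3)
    (huz : u.2.2 = 1) (hvz : v.2.2 = 1) {z : ℝ} (hz : 0 < z)
    (h : T u = z • v) : T u = v := by
  have hzne : z ≠ 0 := ne_of_gt hz
  have h1 : z • v ∈ intLattice3 := by rw [← h]; exact hTf u hu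
  obtain ⟨k, hk⟩ := h1
  have hzk : z = (k.2.2 : ℝ) := by
    have := congrArg (fun p : ℝ×ℝ×ℝ => p.2.2) hk
    simp only at this
    calc z = z * v.2.2 := by rw [hvz, mul_one]
    _ = (z • v).2.2 := rfl
    _ = _ := by rw [hk]
  have h2 : T.symm v = z⁻¹ • u := by
    have h3 : T.symm (z • v) = u := by rw [← h]; simp
    have h4 : z • T.symm v = u := by rw [← h3, map_smul]
    rw [← h4, smul_smul, inv_mul_cancel₀ hzne, one_smul]
  obtain ⟨l, hl⟩ := hTb v hv
  rw [h2] at hl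
  have hzl : z⁻¹ = (l.2.2 : ℝ) := by
    calc z⁻¹ = z⁻¹ * u.2.2 := by rw [huz, mul_one]
    _ = (z⁻¹ • u).2.2 := rfl
    _ = _ := by rw [hl]
  have hz1 : z = 1 := by
    refine eq_of_int_ratio hz one_pos ⟨k.2.2, by rw [← hzk]; ring⟩ ⟨l.2.2, ?_⟩
    rw [← hzl]
    field_simp
  rw [h, hz1, one_smul]

set_option maxHeartbeats 2000000 in
/-- Proposition 3.10. If a lattice-preserving linear automorphism of `ℝ³`
maps `C(a,b,m)` onto `C(a',b',m')` (with the integrality hypotheses), then either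
`(a,b,m) = (a',b',m')` or `m = m' = 0`, `a = b'`, `b = a'`. -/
theorem hirzCone_GL3Z_equiv (m m' : ℕ) (a b a' b' : ℝ)
    (hb : 0 < b) (ha : (m : ℝ)/2 * b < a)
    (hb' : 0 < b') (ha' : (m' : ℝ)/2 * b' < a')
    (hbZ : ∃ k : ℤ, b = k) (hb'Z : ∃ k : ℤ, b' = k)
    (haZ : ∃ k : ℤ, a - (m : ℝ)/2 * b = k)
    (ha'Z : ∃ k : ℤ, a' - (m' : ℝ)/2 * b' = k)
    (T : (ℝ × ℝ × ℝ) ≃ₗ[ℝ] (ℝ × ℝ × ℝ))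
    (hT : T '' intLattice3 = intLattice3)
    (hTC : T '' hirzCone a b m = hirzCone a' b' m') :
    (a = a' ∧ b = b' ∧ m = m') ∨ (m = 0 ∧ m' = 0 ∧ a = b' ∧ b = a') := by
  obtain ⟨kb, hkb⟩ := hbZ
  obtain ⟨kb', hkb'⟩ := hb'Z
  obtain ⟨kc, hkc⟩ := haZ
  obtain ⟨kc', hkc'⟩ := ha'Z
  obtain ⟨P, hPdef⟩ : ∃ x : ℝ, x = a - (m:ℝ)/2*b := ⟨_, rfl⟩
  obtain ⟨Q, hQdef⟩ : ∃ x : ℝ, x = a + (m:ℝ)/2*b := ⟨_, rfl⟩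
  obtain ⟨P', hP'def⟩ : ∃ x : ℝ, x = a' - (m':ℝ)/2*b' := ⟨_, rfl⟩
  obtain ⟨Q', hQ'def⟩ : ∃ x : ℝ, x = a' + (m':ℝ)/2*b' := ⟨_, rfl⟩
  have hP : 0 < P := by rw [hPdef]; linarith
  have hP' : 0 < P' := by rw [hP'def]; linarith
  have hmb : Q - P = (m:ℝ) * b := by rw [hPdef, hQdef]; ring
  have hmb' : Q' - P' = (m':ℝ) * b' := by rw [hP'def, hQ'def]; ring
  have hmbn : (0:ℝ) ≤ (m:ℝ) * b := mul_nonneg (Nat.cast_nonneg m) hb.le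
  have hmbn' : (0:ℝ) ≤ (m':ℝ) * b' := mul_nonneg (Nat.cast_nonneg m') hb'.le
  have hPQ : P ≤ Q := by linarith
  have hPQ' : P' ≤ Q' := by linarith
  have hQ : 0 < Q := lt_of_lt_of_le hP hPQ
  have hQ' : 0 < Q' := lt_of_lt_of_le hP' hPQ'
  have hPZ : P = (kc:ℝ) := by rw [hPdef]; exact hkc
  have hP'Z : P' = (kc':ℝ) := by rw [hP'def]; exact hkc'
  have hQZ : Q = ((kc + m*kb : ℤ):ℝ) := by push_cast; rw [← hkc, ← hkb, hQdef]; ring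
  have hQ'Z : Q' = ((kc' + m'*kb' : ℤ):ℝ) := by push_cast; rw [← hkc', ← hkb', hQ'def]; ring
  have hu0L : ((0:ℝ),(0:ℝ),(1:ℝ)) ∈ intLattice3 := ⟨(0,0,1), by norm_num⟩
  have hu1L : ((0:ℝ),b,(1:ℝ)) ∈ intLattice3 := ⟨(0,kb,1), by rw [hkb]; norm_num⟩
  have hu2L : (P,b,(1:ℝ)) ∈ intLattice3 := ⟨(kc,kb,1), by rw [hPZ, hkb]; norm_num⟩
  have hu3L : (Q,(0:ℝ),(1:ℝ)) ∈ intLattice3 := ⟨(kc+m*kb,0,1), by rw [hQZ]; norm_num⟩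
  have hv0L : ((0:ℝ),(0:ℝ),(1:ℝ)) ∈ intLattice3 := hu0L
  have hv1L : ((0:ℝ),b',(1:ℝ)) ∈ intLattice3 := ⟨(0,kb',1), by rw [hkb']; norm_num⟩
  have hv2L : (P',b',(1:ℝ)) ∈ intLattice3 := ⟨(kc',kb',1), by rw [hP'Z, hkb']; norm_num⟩
  have hv3L : (Q',(0:ℝ),(1:ℝ)) ∈ intLattice3 := ⟨(kc'+m'*kb',0,1), by rw [hQ'Z]; norm_num⟩
  have hTf : ∀ p ∈ intLattice3, T p ∈ intLattice3 := by
    intro p hp; rw [← hT]; exact Set.mem_image_of_mem _ hp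
  have hTb : ∀ p ∈ intLattice3, T.symm p ∈ intLattice3 := by
    intro p hp
    rw [← hT] at hp
    obtain ⟨q, hq, hqe⟩ := hp
    rw [← hqe]
    simpa using hq
  have hC1 : hirzCone a b m = Cgen ((0:ℝ),(0:ℝ),(1:ℝ)) ((0:ℝ),b,(1:ℝ)) (P,b,(1:ℝ)) (Q,(0:ℝ),(1:ℝ)) := by
    rw [hPdef, hQdef]; exact hirzCone_eq_Cgen a b m
  have hC2 : hirzCone a' b' m' = Cgen ((0:ℝ),(0:ℝ),(1:ℝ)) ((0:ℝ),b',(1:ℝ)) (P',b',(1:ℝ)) (Q',(0:ℝ),(1:ℝ)) := by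
    rw [hP'def, hQ'def]; exact hirzCone_eq_Cgen a' b' m'
  have hKey : Cgen (T ((0:ℝ),(0:ℝ),(1:ℝ))) (T ((0:ℝ),b,(1:ℝ))) (T (P,b,(1:ℝ))) (T (Q,(0:ℝ),(1:ℝ)))
      = Hset P' Q' b' := by
    rw [← Cgen_image, ← hC1, hTC, hC2, Cgen_eq_Hset P' Q' b' hb' hP' hPQ']
  have hD0 := extract 1 0 0 0 1 0 _ _ _ _ ((0:ℝ),(0:ℝ),(1:ℝ)) (Hset P' Q' b') hKey
    (fun p hp => by have := hp.1; simpa using this)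
    (fun p hp => by have := hp.2.1; simpa using this)
    (by refine ⟨le_refl _, le_refl _, ?_, ?_⟩
        · show (0:ℝ) ≤ b' * 1; linarith
        · show b' * 0 + (Q' - P') * 0 ≤ Q' * b' * 1; nlinarith [mul_pos hQ' hb'])
    rfl (by norm_num) (by norm_num)
    (by rintro p ⟨q1, q2, q3, q4⟩ h1 h2 hz
        refine ⟨p.2.2, by nlinarith, triple_ext ?_ ?_ ?_⟩
        · show p.1 = p.2.2 * 0; linarith
        · show p.2.1 = p.2.2 * 0; linarith
        · show p.2.2 = p.2.2 * 1; ring)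
  have hD1 := extract 1 0 0 0 (-1) b' _ _ _ _ ((0:ℝ),b',(1:ℝ)) (Hset P' Q' b') hKey
    (fun p hp => by have := hp.1; simpa using this)
    (fun p hp => by nlinarith [hp.2.2.1])
    (by refine ⟨le_refl _, hb'.le, ?_, ?_⟩
        · show b' ≤ b' * 1; linarith
        · show b' * 0 + (Q' - P') * b' ≤ Q' * b' * 1; nlinarith [mul_pos hP' hb'])
    rfl (by norm_num) (by show 0 * 0 + (-1) * b' + b' * 1 = 0; ring)
    (by rintro p ⟨q1, q2, q3, q4⟩ h1 h2 hz
        refine ⟨p.2.2, by nlinarith, triple_ext ?_ ?_ ?_⟩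
        · show p.1 = p.2.2 * 0; linarith
        · show p.2.1 = p.2.2 * b'; nlinarith [h2]
        · show p.2.2 = p.2.2 * 1; ring)
  have hD2 := extract 0 (-1) b' (-b') (-(Q'-P')) (Q'*b') _ _ _ _ (P',b',(1:ℝ)) (Hset P' Q' b') hKey
    (fun p hp => by nlinarith [hp.2.2.1])
    (fun p hp => by nlinarith [hp.2.2.2])
    (by refine ⟨hP'.le, hb'.le, ?_, ?_⟩
        · show b' ≤ b' * 1; linarith
        · show b' * P' + (Q' - P') * b' ≤ Q' * b' * 1; nlinarith)
    rfl (by show 0 * P' + (-1) * b' + b' * 1 = 0; ring)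
    (by show (-b') * P' + (-(Q'-P')) * b' + Q'*b' * 1 = 0; ring)
    (by rintro p ⟨q1, q2, q3, q4⟩ h1 h2 hz
        have hyz : p.2.1 = b' * p.2.2 := by nlinarith [h1]
        have h3 : b' * (p.1 - P' * p.2.2) = 0 := by linear_combination (-1) * h2 - (Q'-P') * hyz
        have h4 : p.1 = P' * p.2.2 := by
          rcases mul_eq_zero.mp h3 with h | h
          · exact absurd h (ne_of_gt hb')
          · linarith
        refine ⟨p.2.2, by nlinarith, triple_ext ?_ ?_ ?_⟩
        · show p.1 = p.2.2 * P'; linarith [h4]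
        · show p.2.1 = p.2.2 * b'; linarith [hyz]
        · show p.2.2 = p.2.2 * 1; ring)
  have hD3 := extract 0 1 0 (-b') (-(Q'-P')) (Q'*b') _ _ _ _ (Q',(0:ℝ),(1:ℝ)) (Hset P' Q' b') hKey
    (fun p hp => by have := hp.2.1; simpa using this)
    (fun p hp => by nlinarith [hp.2.2.2])
    (by refine ⟨hQ'.le, le_refl _, ?_, ?_⟩
        · show (0:ℝ) ≤ b' * 1; linarith
        · show b' * Q' + (Q' - P') * 0 ≤ Q' * b' * 1; nlinarith)
    rfl (by show 0 * Q' + 1 * 0 + 0 * 1 = 0; ring)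
    (by show (-b') * Q' + (-(Q'-P')) * 0 + Q'*b' * 1 = 0; ring)
    (by rintro p ⟨q1, q2, q3, q4⟩ h1 h2 hz
        have hy0 : p.2.1 = 0 := by nlinarith [h1]
        have h3 : b' * (p.1 - Q' * p.2.2) = 0 := by linear_combination (-1) * h2 - (Q'-P') * hy0
        have h4 : p.1 = Q' * p.2.2 := by
          rcases mul_eq_zero.mp h3 with h | h
          · exact absurd h (ne_of_gt hb')
          · linarith
        refine ⟨p.2.2, by nlinarith, triple_ext ?_ ?_ ?_⟩
        · show p.1 = p.2.2 * Q'; linarith [h4]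
        · show p.2.1 = p.2.2 * 0; linarith
        · show p.2.2 = p.2.2 * 1; ring)
  have E0 : T ((0:ℝ),(0:ℝ),(1:ℝ)) = ((0:ℝ),(0:ℝ),(1:ℝ)) ∨ T ((0:ℝ),b,(1:ℝ)) = ((0:ℝ),(0:ℝ),(1:ℝ)) ∨
      T (P,b,(1:ℝ)) = ((0:ℝ),(0:ℝ),(1:ℝ)) ∨ T (Q,(0:ℝ),(1:ℝ)) = ((0:ℝ),(0:ℝ),(1:ℝ)) := by
    obtain ⟨z, hz, hd⟩ := hD0
    rcases hd with h | h | h | h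
    · exact Or.inl (scale_one T hTf hTb _ _ hu0L hv0L rfl rfl hz h)
    · exact Or.inr (Or.inl (scale_one T hTf hTb _ _ hu1L hv0L rfl rfl hz h))
    · exact Or.inr (Or.inr (Or.inl (scale_one T hTf hTb _ _ hu2L hv0L rfl rfl hz h)))
    · exact Or.inr (Or.inr (Or.inr (scale_one T hTf hTb _ _ hu3L hv0L rfl rfl hz h)))
  have E1 : T ((0:ℝ),(0:ℝ),(1:ℝ)) = ((0:ℝ),b',(1:ℝ)) ∨ T ((0:ℝ),b,(1:ℝ)) = ((0:ℝ),b',(1:ℝ)) ∨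
      T (P,b,(1:ℝ)) = ((0:ℝ),b',(1:ℝ)) ∨ T (Q,(0:ℝ),(1:ℝ)) = ((0:ℝ),b',(1:ℝ)) := by
    obtain ⟨z, hz, hd⟩ := hD1
    rcases hd with h | h | h | h
    · exact Or.inl (scale_one T hTf hTb _ _ hu0L hv1L rfl rfl hz h)
    · exact Or.inr (Or.inl (scale_one T hTf hTb _ _ hu1L hv1L rfl rfl hz h))
    · exact Or.inr (Or.inr (Or.inl (scale_one T hTf hTb _ _ hu2L hv1L rfl rfl hz h)))
    · exact Or.inr (Or.inr (Or.inr (scale_one T hTf hTb _ _ hu3L hv1L rfl rfl hz h)))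
  have E2 : T ((0:ℝ),(0:ℝ),(1:ℝ)) = (P',b',(1:ℝ)) ∨ T ((0:ℝ),b,(1:ℝ)) = (P',b',(1:ℝ)) ∨
      T (P,b,(1:ℝ)) = (P',b',(1:ℝ)) ∨ T (Q,(0:ℝ),(1:ℝ)) = (P',b',(1:ℝ)) := by
    obtain ⟨z, hz, hd⟩ := hD2
    rcases hd with h | h | h | h
    · exact Or.inl (scale_one T hTf hTb _ _ hu0L hv2L rfl rfl hz h)
    · exact Or.inr (Or.inl (scale_one T hTf hTb _ _ hu1L hv2L rfl rfl hz h))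
    · exact Or.inr (Or.inr (Or.inl (scale_one T hTf hTb _ _ hu2L hv2L rfl rfl hz h)))
    · exact Or.inr (Or.inr (Or.inr (scale_one T hTf hTb _ _ hu3L hv2L rfl rfl hz h)))
  have E3 : T ((0:ℝ),(0:ℝ),(1:ℝ)) = (Q',(0:ℝ),(1:ℝ)) ∨ T ((0:ℝ),b,(1:ℝ)) = (Q',(0:ℝ),(1:ℝ)) ∨
      T (P,b,(1:ℝ)) = (Q',(0:ℝ),(1:ℝ)) ∨ T (Q,(0:ℝ),(1:ℝ)) = (Q',(0:ℝ),(1:ℝ)) := by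
    obtain ⟨z, hz, hd⟩ := hD3
    rcases hd with h | h | h | h
    · exact Or.inl (scale_one T hTf hTb _ _ hu0L hv3L rfl rfl hz h)
    · exact Or.inr (Or.inl (scale_one T hTf hTb _ _ hu1L hv3L rfl rfl hz h))
    · exact Or.inr (Or.inr (Or.inl (scale_one T hTf hTb _ _ hu2L hv3L rfl rfl hz h)))
    · exact Or.inr (Or.inr (Or.inr (scale_one T hTf hTb _ _ hu3L hv3L rfl rfl hz h)))
  clear hD0 hD1 hD2 hD3 hKey hTC hT hC1 hC2
  have hrel0 : (-P) • ((0:ℝ),(0:ℝ),(1:ℝ)) + Q • ((0:ℝ),b,(1:ℝ)) + (-Q) • (P,b,(1:ℝ))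
      + P • (Q,(0:ℝ),(1:ℝ)) = (0:ℝ×ℝ×ℝ) := by
    rw [combo4, show (0:ℝ×ℝ×ℝ) = ((0:ℝ),(0:ℝ),(0:ℝ)) from rfl, Prod.mk.injEq, Prod.mk.injEq]
    refine ⟨by ring, by ring, by ring⟩
  have hrel : (-P) • T ((0:ℝ),(0:ℝ),(1:ℝ)) + Q • T ((0:ℝ),b,(1:ℝ)) + (-Q) • T (P,b,(1:ℝ))
      + P • T (Q,(0:ℝ),(1:ℝ)) = 0 := by
    rw [← map_smul, ← map_smul, ← map_smul, ← map_smul, ← map_add, ← map_add, ← map_add,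
      hrel0, map_zero]
  have hTd1 : T (b • ((0:ℝ),(1:ℝ),(0:ℝ))) = T ((0:ℝ),b,(1:ℝ)) - T ((0:ℝ),(0:ℝ),(1:ℝ)) := by
    rw [← map_sub]
    congr 1
    rw [smul_triple, triple_sub, Prod.mk.injEq, Prod.mk.injEq]
    norm_num
  have hTd2 : T (P • ((1:ℝ),(0:ℝ),(0:ℝ))) = T (P,b,(1:ℝ)) - T ((0:ℝ),b,(1:ℝ)) := by
    rw [← map_sub]
    congr 1
    rw [smul_triple, triple_sub, Prod.mk.injEq, Prod.mk.injEq]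
    norm_num
  have he010 : ((0:ℝ),(1:ℝ),(0:ℝ)) ∈ intLattice3 := ⟨(0,1,0), by norm_num⟩
  have he100 : ((1:ℝ),(0:ℝ),(0:ℝ)) ∈ intLattice3 := ⟨(1,0,0), by norm_num⟩
  have he0m10 : ((0:ℝ),(-1:ℝ),(0:ℝ)) ∈ intLattice3 := ⟨(0,-1,0), by norm_num⟩
  have hem100 : ((-1:ℝ),(0:ℝ),(0:ℝ)) ∈ intLattice3 := ⟨(-1,0,0), by norm_num⟩
  have hem' : (((m':ℝ)),(-1:ℝ),(0:ℝ)) ∈ intLattice3 :=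
    ⟨((m':ℤ),-1,0), triple_ext (by push_cast; ring) (by norm_num) (by norm_num)⟩
  have hemm' : ((-(m':ℝ)),(1:ℝ),(0:ℝ)) ∈ intLattice3 :=
    ⟨(-(m':ℤ),1,0), triple_ext (by push_cast; ring) (by norm_num) (by norm_num)⟩
  have hu010 : ((0:ℝ),(1:ℝ),(0:ℝ)).1 = 1 ∨ ((0:ℝ),(1:ℝ),(0:ℝ)).1 = -1 ∨
      ((0:ℝ),(1:ℝ),(0:ℝ)).2.1 = 1 ∨ ((0:ℝ),(1:ℝ),(0:ℝ)).2.1 = -1 := Or.inr (Or.inr (Or.inl rfl))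
  have hu100 : ((1:ℝ),(0:ℝ),(0:ℝ)).1 = 1 ∨ ((1:ℝ),(0:ℝ),(0:ℝ)).1 = -1 ∨
      ((1:ℝ),(0:ℝ),(0:ℝ)).2.1 = 1 ∨ ((1:ℝ),(0:ℝ),(0:ℝ)).2.1 = -1 := Or.inl rfl
  have hu0m10 : ((0:ℝ),(-1:ℝ),(0:ℝ)).1 = 1 ∨ ((0:ℝ),(-1:ℝ),(0:ℝ)).1 = -1 ∨
      ((0:ℝ),(-1:ℝ),(0:ℝ)).2.1 = 1 ∨ ((0:ℝ),(-1:ℝ),(0:ℝ)).2.1 = -1 := Or.inr (Or.inr (Or.inr rfl))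
  have hum100 : ((-1:ℝ),(0:ℝ),(0:ℝ)).1 = 1 ∨ ((-1:ℝ),(0:ℝ),(0:ℝ)).1 = -1 ∨
      ((-1:ℝ),(0:ℝ),(0:ℝ)).2.1 = 1 ∨ ((-1:ℝ),(0:ℝ),(0:ℝ)).2.1 = -1 := Or.inr (Or.inl rfl)
  have hum' : (((m':ℝ)),(-1:ℝ),(0:ℝ)).1 = 1 ∨ (((m':ℝ)),(-1:ℝ),(0:ℝ)).1 = -1 ∨
      (((m':ℝ)),(-1:ℝ),(0:ℝ)).2.1 = 1 ∨ (((m':ℝ)),(-1:ℝ),(0:ℝ)).2.1 = -1 :=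
    Or.inr (Or.inr (Or.inr rfl))
  have humm' : ((-(m':ℝ)),(1:ℝ),(0:ℝ)).1 = 1 ∨ ((-(m':ℝ)),(1:ℝ),(0:ℝ)).1 = -1 ∨
      ((-(m':ℝ)),(1:ℝ),(0:ℝ)).2.1 = 1 ∨ ((-(m':ℝ)),(1:ℝ),(0:ℝ)).2.1 = -1 :=
    Or.inr (Or.inr (Or.inl rfl))
  have hne01 : ¬(((0:ℝ),(0:ℝ),(1:ℝ)) = ((0:ℝ),b',(1:ℝ))) := by
    intro h; rw [Prod.mk.injEq, Prod.mk.injEq] at h; obtain ⟨-, h2, -⟩ := h; linarith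
  have hne02 : ¬(((0:ℝ),(0:ℝ),(1:ℝ)) = (P',b',(1:ℝ))) := by
    intro h; rw [Prod.mk.injEq, Prod.mk.injEq] at h; obtain ⟨-, h2, -⟩ := h; linarith
  have hne03 : ¬(((0:ℝ),(0:ℝ),(1:ℝ)) = (Q',(0:ℝ),(1:ℝ))) := by
    intro h; rw [Prod.mk.injEq, Prod.mk.injEq] at h; obtain ⟨h1, -, -⟩ := h; linarith
  have hne12 : ¬(((0:ℝ),b',(1:ℝ)) = (P',b',(1:ℝ))) := by
    intro h; rw [Prod.mk.injEq, Prod.mk.injEq] at h; obtain ⟨h1, -, -⟩ := h; linarith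
  have hne13 : ¬(((0:ℝ),b',(1:ℝ)) = (Q',(0:ℝ),(1:ℝ))) := by
    intro h; rw [Prod.mk.injEq, Prod.mk.injEq] at h; obtain ⟨-, h2, -⟩ := h; linarith
  have hne23 : ¬((P',b',(1:ℝ)) = (Q',(0:ℝ),(1:ℝ))) := by
    intro h; rw [Prod.mk.injEq, Prod.mk.injEq] at h; obtain ⟨-, h2, -⟩ := h; linarith
  rcases E0 with hA0 | hA0 | hA0 | hA0 <;>
    rcases E1 with hA1 | hA1 | hA1 | hA1 <;>
      rcases E2 with hA2 | hA2 | hA2 | hA2 <;>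
        rcases E3 with hA3 | hA3 | hA3 | hA3
  all_goals try (exact absurd (hA0.symm.trans hA1) hne01)
  all_goals try (exact absurd (hA0.symm.trans hA2) hne02)
  all_goals try (exact absurd (hA0.symm.trans hA3) hne03)
  all_goals try (exact absurd (hA1.symm.trans hA2) hne12)
  all_goals try (exact absurd (hA1.symm.trans hA3) hne13)
  all_goals try (exact absurd (hA2.symm.trans hA3) hne23)
  · have hE1 : T (b • ((0:ℝ),(1:ℝ),(0:ℝ))) = b' • ((0:ℝ),(1:ℝ),(0:ℝ)) := by
      rw [hTd1, hA1, hA0, triple_sub, smul_triple, Prod.mk.injEq, Prod.mk.injEq]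
      norm_num
    have hbb : b = b' := edge_eq T hTf hTb hb hb' _ _ he010 he010 hu010 hu010 hE1
    have hE2 : T (P • ((1:ℝ),(0:ℝ),(0:ℝ))) = P' • ((1:ℝ),(0:ℝ),(0:ℝ)) := by
      rw [hTd2, hA2, hA1, triple_sub, smul_triple, Prod.mk.injEq, Prod.mk.injEq]
      norm_num
    have hPP : P = P' := edge_eq T hTf hTb hP hP' _ _ he100 he100 hu100 hu100 hE2
    rw [hA0, hA1, hA2, hA3, combo4, show (0:ℝ×ℝ×ℝ) = ((0:ℝ),(0:ℝ),(0:ℝ)) from rfl,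
      Prod.mk.injEq, Prod.mk.injEq] at hrel
    obtain ⟨hx, -, -⟩ := hrel
    have hQQ : Q = Q' := by
      have h2 : P' * Q = P' * Q' := by rw [hPP] at hx; linarith [hx]
      exact mul_left_cancel₀ (ne_of_gt (hPP ▸ hP)) h2
    left
    refine ⟨by linarith [hPdef, hQdef, hP'def, hQ'def], hbb, ?_⟩
    have h1 : (m:ℝ) * b = (m':ℝ) * b' := by linarith [hmb, hmb']
    rw [← hbb] at h1
    exact_mod_cast mul_right_cancel₀ (ne_of_gt hb) h1
  · rw [hA0, hA1, hA2, hA3, combo4, show (0:ℝ×ℝ×ℝ) = ((0:ℝ),(0:ℝ),(0:ℝ)) from rfl,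
      Prod.mk.injEq, Prod.mk.injEq] at hrel
    obtain ⟨hx, hy, -⟩ := hrel
    exfalso
    linarith [mul_pos hP hb', mul_pos hQ hb', mul_pos hP hP', mul_pos hQ hQ',
      mul_pos hP hQ', mul_pos hQ hP']
  · rw [hA0, hA1, hA2, hA3, combo4, show (0:ℝ×ℝ×ℝ) = ((0:ℝ),(0:ℝ),(0:ℝ)) from rfl,
      Prod.mk.injEq, Prod.mk.injEq] at hrel
    obtain ⟨hx, hy, -⟩ := hrel
    exfalso
    linarith [mul_pos hP hb', mul_pos hQ hb', mul_pos hP hP', mul_pos hQ hQ',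
      mul_pos hP hQ', mul_pos hQ hP']
  · rw [hA0, hA1, hA2, hA3, combo4, show (0:ℝ×ℝ×ℝ) = ((0:ℝ),(0:ℝ),(0:ℝ)) from rfl,
      Prod.mk.injEq, Prod.mk.injEq] at hrel
    obtain ⟨hx, hy, -⟩ := hrel
    exfalso
    linarith [mul_pos hP hb', mul_pos hQ hb', mul_pos hP hP', mul_pos hQ hQ',
      mul_pos hP hQ', mul_pos hQ hP']
  · rw [hA0, hA1, hA2, hA3, combo4, show (0:ℝ×ℝ×ℝ) = ((0:ℝ),(0:ℝ),(0:ℝ)) from rfl,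
      Prod.mk.injEq, Prod.mk.injEq] at hrel
    obtain ⟨hx, hy, -⟩ := hrel
    exfalso
    linarith [mul_pos hP hb', mul_pos hQ hb', mul_pos hP hP', mul_pos hQ hQ',
      mul_pos hP hQ', mul_pos hQ hP']
  · rw [hA0, hA1, hA2, hA3, combo4, show (0:ℝ×ℝ×ℝ) = ((0:ℝ),(0:ℝ),(0:ℝ)) from rfl,
      Prod.mk.injEq, Prod.mk.injEq] at hrel
    obtain ⟨hx, hy, -⟩ := hrel
    have hPQe : P = Q := by
      have h2 : P * b' = Q * b' := by linarith [hy]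
      exact mul_right_cancel₀ (ne_of_gt hb') h2
    have hPQ'e : P' = Q' := by
      have h2 : Q * P' = Q * Q' := by linarith [hx]
      exact mul_left_cancel₀ (ne_of_gt hQ) h2
    have hE1 : T (b • ((0:ℝ),(1:ℝ),(0:ℝ))) = Q' • ((1:ℝ),(0:ℝ),(0:ℝ)) := by
      rw [hTd1, hA3, hA0, triple_sub, smul_triple, Prod.mk.injEq, Prod.mk.injEq]
      norm_num
    have hbv : b = Q' := edge_eq T hTf hTb hb hQ' _ _ he010 he100 hu010 hu100 hE1
    have hE2 : T (P • ((1:ℝ),(0:ℝ),(0:ℝ))) = b' • ((-(m':ℝ)),(1:ℝ),(0:ℝ)) := by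
      rw [hTd2, hA2, hA3, triple_sub, smul_triple, Prod.mk.injEq, Prod.mk.injEq]
      refine ⟨by linarith [hmb'], by ring, by ring⟩
    have hPv : P = b' := edge_eq T hTf hTb hP hb' _ _ he100 hemm' hu100 humm' hE2
    right
    have hm0 : m = 0 := by
      have h1 : (m:ℝ) = 0 := by
        rcases mul_eq_zero.mp (show (m:ℝ) * b = 0 by linarith [hmb]) with h | h
        · exact h
        · exact absurd h (ne_of_gt hb)
      exact_mod_cast h1
    have hm'0 : m' = 0 := by
      have h1 : (m':ℝ) = 0 := by
        rcases mul_eq_zero.mp (show (m':ℝ) * b' = 0 by linarith [hmb']) with h | h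
        · exact h
        · exact absurd h (ne_of_gt hb')
      exact_mod_cast h1
    exact ⟨hm0, hm'0, by linarith [hPdef, hQdef], by linarith [hP'def, hQ'def]⟩
  · rw [hA0, hA1, hA2, hA3, combo4, show (0:ℝ×ℝ×ℝ) = ((0:ℝ),(0:ℝ),(0:ℝ)) from rfl,
      Prod.mk.injEq, Prod.mk.injEq] at hrel
    obtain ⟨hx, hy, -⟩ := hrel
    exfalso
    linarith [mul_pos hP hb', mul_pos hQ hb', mul_pos hP hP', mul_pos hQ hQ',
      mul_pos hP hQ', mul_pos hQ hP']
  · rw [hA0, hA1, hA2, hA3, combo4, show (0:ℝ×ℝ×ℝ) = ((0:ℝ),(0:ℝ),(0:ℝ)) from rfl,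
      Prod.mk.injEq, Prod.mk.injEq] at hrel
    obtain ⟨hx, -, -⟩ := hrel
    have hE1 : T (b • ((0:ℝ),(1:ℝ),(0:ℝ))) = b' • ((0:ℝ),(-1:ℝ),(0:ℝ)) := by
      rw [hTd1, hA0, hA1, triple_sub, smul_triple, Prod.mk.injEq, Prod.mk.injEq]
      norm_num
    have hbb : b = b' := edge_eq T hTf hTb hb hb' _ _ he010 he0m10 hu010 hu0m10 hE1
    have hE2 : T (P • ((1:ℝ),(0:ℝ),(0:ℝ))) = Q' • ((1:ℝ),(0:ℝ),(0:ℝ)) := by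
      rw [hTd2, hA3, hA0, triple_sub, smul_triple, Prod.mk.injEq, Prod.mk.injEq]
      norm_num
    have hPv : P = Q' := edge_eq T hTf hTb hP hQ' _ _ he100 he100 hu100 hu100 hE2
    have hP'Q : P' = Q := by
      have h2 : P * P' = P * Q := by rw [← hPv] at hx; linarith [hx]
      exact mul_left_cancel₀ (ne_of_gt hP) h2
    have hPP : P = P' := by linarith [hPQ, hPQ', hPv, hP'Q]
    have hQQ : Q = Q' := by linarith [hPQ, hPQ', hPv, hP'Q]
    left
    refine ⟨by linarith [hPdef, hQdef, hP'def, hQ'def], hbb, ?_⟩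
    have h1 : (m:ℝ) * b = (m':ℝ) * b' := by linarith [hmb, hmb']
    rw [← hbb] at h1
    exact_mod_cast mul_right_cancel₀ (ne_of_gt hb) h1
  · rw [hA0, hA1, hA2, hA3, combo4, show (0:ℝ×ℝ×ℝ) = ((0:ℝ),(0:ℝ),(0:ℝ)) from rfl,
      Prod.mk.injEq, Prod.mk.injEq] at hrel
    obtain ⟨hx, hy, -⟩ := hrel
    exfalso
    linarith [mul_pos hP hb', mul_pos hQ hb', mul_pos hP hP', mul_pos hQ hQ',
      mul_pos hP hQ', mul_pos hQ hP']
  · rw [hA0, hA1, hA2, hA3, combo4, show (0:ℝ×ℝ×ℝ) = ((0:ℝ),(0:ℝ),(0:ℝ)) from rfl,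
      Prod.mk.injEq, Prod.mk.injEq] at hrel
    obtain ⟨hx, hy, -⟩ := hrel
    have hPQe : P = Q := by
      have h2 : P * b' = Q * b' := by linarith [hy]
      exact mul_right_cancel₀ (ne_of_gt hb') h2
    have hPQ'e : P' = Q' := by
      have h2 : P * P' = P * Q' := by linarith [hx]
      exact mul_left_cancel₀ (ne_of_gt hP) h2
    have hE1 : T (b • ((0:ℝ),(1:ℝ),(0:ℝ))) = Q' • ((-1:ℝ),(0:ℝ),(0:ℝ)) := by
      rw [hTd1, hA0, hA3, triple_sub, smul_triple, Prod.mk.injEq, Prod.mk.injEq]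
      norm_num
    have hbv : b = Q' := edge_eq T hTf hTb hb hQ' _ _ he010 hem100 hu010 hum100 hE1
    have hE2 : T (P • ((1:ℝ),(0:ℝ),(0:ℝ))) = b' • ((0:ℝ),(1:ℝ),(0:ℝ)) := by
      rw [hTd2, hA1, hA0, triple_sub, smul_triple, Prod.mk.injEq, Prod.mk.injEq]
      norm_num
    have hPv : P = b' := edge_eq T hTf hTb hP hb' _ _ he100 he010 hu100 hu010 hE2
    right
    have hm0 : m = 0 := by
      have h1 : (m:ℝ) = 0 := by
        rcases mul_eq_zero.mp (show (m:ℝ) * b = 0 by linarith [hmb]) with h | h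
        · exact h
        · exact absurd h (ne_of_gt hb)
      exact_mod_cast h1
    have hm'0 : m' = 0 := by
      have h1 : (m':ℝ) = 0 := by
        rcases mul_eq_zero.mp (show (m':ℝ) * b' = 0 by linarith [hmb']) with h | h
        · exact h
        · exact absurd h (ne_of_gt hb')
      exact_mod_cast h1
    exact ⟨hm0, hm'0, by linarith [hPdef, hQdef], by linarith [hP'def, hQ'def]⟩
  · rw [hA0, hA1, hA2, hA3, combo4, show (0:ℝ×ℝ×ℝ) = ((0:ℝ),(0:ℝ),(0:ℝ)) from rfl,
      Prod.mk.injEq, Prod.mk.injEq] at hrel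
    obtain ⟨hx, hy, -⟩ := hrel
    exfalso
    linarith [mul_pos hP hb', mul_pos hQ hb', mul_pos hP hP', mul_pos hQ hQ',
      mul_pos hP hQ', mul_pos hQ hP']
  · rw [hA0, hA1, hA2, hA3, combo4, show (0:ℝ×ℝ×ℝ) = ((0:ℝ),(0:ℝ),(0:ℝ)) from rfl,
      Prod.mk.injEq, Prod.mk.injEq] at hrel
    obtain ⟨hx, hy, -⟩ := hrel
    exfalso
    linarith [mul_pos hP hb', mul_pos hQ hb', mul_pos hP hP', mul_pos hQ hQ',
      mul_pos hP hQ', mul_pos hQ hP']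
  · rw [hA0, hA1, hA2, hA3, combo4, show (0:ℝ×ℝ×ℝ) = ((0:ℝ),(0:ℝ),(0:ℝ)) from rfl,
      Prod.mk.injEq, Prod.mk.injEq] at hrel
    obtain ⟨hx, hy, -⟩ := hrel
    exfalso
    linarith [mul_pos hP hb', mul_pos hQ hb', mul_pos hP hP', mul_pos hQ hQ',
      mul_pos hP hQ', mul_pos hQ hP']
  · rw [hA0, hA1, hA2, hA3, combo4, show (0:ℝ×ℝ×ℝ) = ((0:ℝ),(0:ℝ),(0:ℝ)) from rfl,
      Prod.mk.injEq, Prod.mk.injEq] at hrel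
    obtain ⟨hx, hy, -⟩ := hrel
    exfalso
    linarith [mul_pos hP hb', mul_pos hQ hb', mul_pos hP hP', mul_pos hQ hQ',
      mul_pos hP hQ', mul_pos hQ hP']
  · rw [hA0, hA1, hA2, hA3, combo4, show (0:ℝ×ℝ×ℝ) = ((0:ℝ),(0:ℝ),(0:ℝ)) from rfl,
      Prod.mk.injEq, Prod.mk.injEq] at hrel
    obtain ⟨hx, hy, -⟩ := hrel
    have hPQe : P = Q := by
      have h2 : P * b' = Q * b' := by linarith [hy]
      exact mul_right_cancel₀ (ne_of_gt hb') h2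
    have hPQ'e : P' = Q' := by
      have h2 : P * P' = P * Q' := by linarith [hx]
      exact mul_left_cancel₀ (ne_of_gt hP) h2
    have hE1 : T (b • ((0:ℝ),(1:ℝ),(0:ℝ))) = P' • ((-1:ℝ),(0:ℝ),(0:ℝ)) := by
      rw [hTd1, hA1, hA2, triple_sub, smul_triple, Prod.mk.injEq, Prod.mk.injEq]
      norm_num
    have hbv : b = P' := edge_eq T hTf hTb hb hP' _ _ he010 hem100 hu010 hum100 hE1
    have hE2 : T (P • ((1:ℝ),(0:ℝ),(0:ℝ))) = b' • ((0:ℝ),(-1:ℝ),(0:ℝ)) := by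
      rw [hTd2, hA0, hA1, triple_sub, smul_triple, Prod.mk.injEq, Prod.mk.injEq]
      norm_num
    have hPv : P = b' := edge_eq T hTf hTb hP hb' _ _ he100 he0m10 hu100 hu0m10 hE2
    right
    have hm0 : m = 0 := by
      have h1 : (m:ℝ) = 0 := by
        rcases mul_eq_zero.mp (show (m:ℝ) * b = 0 by linarith [hmb]) with h | h
        · exact h
        · exact absurd h (ne_of_gt hb)
      exact_mod_cast h1
    have hm'0 : m' = 0 := by
      have h1 : (m':ℝ) = 0 := by
        rcases mul_eq_zero.mp (show (m':ℝ) * b' = 0 by linarith [hmb']) with h | h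
        · exact h
        · exact absurd h (ne_of_gt hb')
      exact_mod_cast h1
    exact ⟨hm0, hm'0, by linarith [hPdef, hQdef], by linarith [hP'def, hQ'def]⟩
  · rw [hA0, hA1, hA2, hA3, combo4, show (0:ℝ×ℝ×ℝ) = ((0:ℝ),(0:ℝ),(0:ℝ)) from rfl,
      Prod.mk.injEq, Prod.mk.injEq] at hrel
    obtain ⟨hx, hy, -⟩ := hrel
    exfalso
    linarith [mul_pos hP hb', mul_pos hQ hb', mul_pos hP hP', mul_pos hQ hQ',
      mul_pos hP hQ', mul_pos hQ hP']
  · rw [hA0, hA1, hA2, hA3, combo4, show (0:ℝ×ℝ×ℝ) = ((0:ℝ),(0:ℝ),(0:ℝ)) from rfl,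
      Prod.mk.injEq, Prod.mk.injEq] at hrel
    obtain ⟨hx, -, -⟩ := hrel
    have hE1 : T (b • ((0:ℝ),(1:ℝ),(0:ℝ))) = b' • (((m':ℝ)),(-1:ℝ),(0:ℝ)) := by
      rw [hTd1, hA3, hA2, triple_sub, smul_triple, Prod.mk.injEq, Prod.mk.injEq]
      refine ⟨by linarith [hmb'], by ring, by ring⟩
    have hbb : b = b' := edge_eq T hTf hTb hb hb' _ _ he010 hem' hu010 hum' hE1
    have hE2 : T (P • ((1:ℝ),(0:ℝ),(0:ℝ))) = Q' • ((-1:ℝ),(0:ℝ),(0:ℝ)) := by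
      rw [hTd2, hA0, hA3, triple_sub, smul_triple, Prod.mk.injEq, Prod.mk.injEq]
      norm_num
    have hPv : P = Q' := edge_eq T hTf hTb hP hQ' _ _ he100 hem100 hu100 hum100 hE2
    have hQP' : Q = P' := by
      have h2 : P * Q = P * P' := by rw [← hPv] at hx; linarith [hx]
      exact mul_left_cancel₀ (ne_of_gt hP) h2
    have hPP : P = P' := by linarith [hPQ, hPQ', hPv, hQP']
    have hQQ : Q = Q' := by linarith [hPQ, hPQ', hPv, hQP']
    left
    refine ⟨by linarith [hPdef, hQdef, hP'def, hQ'def], hbb, ?_⟩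
    have h1 : (m:ℝ) * b = (m':ℝ) * b' := by linarith [hmb, hmb']
    rw [← hbb] at h1
    exact_mod_cast mul_right_cancel₀ (ne_of_gt hb) h1
  · rw [hA0, hA1, hA2, hA3, combo4, show (0:ℝ×ℝ×ℝ) = ((0:ℝ),(0:ℝ),(0:ℝ)) from rfl,
      Prod.mk.injEq, Prod.mk.injEq] at hrel
    obtain ⟨hx, hy, -⟩ := hrel
    exfalso
    linarith [mul_pos hP hb', mul_pos hQ hb', mul_pos hP hP', mul_pos hQ hQ',
      mul_pos hP hQ', mul_pos hQ hP']
  · rw [hA0, hA1, hA2, hA3, combo4, show (0:ℝ×ℝ×ℝ) = ((0:ℝ),(0:ℝ),(0:ℝ)) from rfl,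
      Prod.mk.injEq, Prod.mk.injEq] at hrel
    obtain ⟨hx, hy, -⟩ := hrel
    have hPQe : P = Q := by
      have h2 : P * b' = Q * b' := by linarith [hy]
      exact mul_right_cancel₀ (ne_of_gt hb') h2
    have hPQ'e : P' = Q' := by
      have h2 : Q * P' = Q * Q' := by linarith [hx]
      exact mul_left_cancel₀ (ne_of_gt hQ) h2
    have hE1 : T (b • ((0:ℝ),(1:ℝ),(0:ℝ))) = P' • ((1:ℝ),(0:ℝ),(0:ℝ)) := by
      rw [hTd1, hA2, hA1, triple_sub, smul_triple, Prod.mk.injEq, Prod.mk.injEq]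
      norm_num
    have hbv : b = P' := edge_eq T hTf hTb hb hP' _ _ he010 he100 hu010 hu100 hE1
    have hE2 : T (P • ((1:ℝ),(0:ℝ),(0:ℝ))) = b' • (((m':ℝ)),(-1:ℝ),(0:ℝ)) := by
      rw [hTd2, hA3, hA2, triple_sub, smul_triple, Prod.mk.injEq, Prod.mk.injEq]
      refine ⟨by linarith [hmb'], by ring, by ring⟩
    have hPv : P = b' := edge_eq T hTf hTb hP hb' _ _ he100 hem' hu100 hum' hE2
    right
    have hm0 : m = 0 := by
      have h1 : (m:ℝ) = 0 := by
        rcases mul_eq_zero.mp (show (m:ℝ) * b = 0 by linarith [hmb]) with h | h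
        · exact h
        · exact absurd h (ne_of_gt hb)
      exact_mod_cast h1
    have hm'0 : m' = 0 := by
      have h1 : (m':ℝ) = 0 := by
        rcases mul_eq_zero.mp (show (m':ℝ) * b' = 0 by linarith [hmb']) with h | h
        · exact h
        · exact absurd h (ne_of_gt hb')
      exact_mod_cast h1
    exact ⟨hm0, hm'0, by linarith [hPdef, hQdef], by linarith [hP'def, hQ'def]⟩
  · rw [hA0, hA1, hA2, hA3, combo4, show (0:ℝ×ℝ×ℝ) = ((0:ℝ),(0:ℝ),(0:ℝ)) from rfl,
      Prod.mk.injEq, Prod.mk.injEq] at hrel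
    obtain ⟨hx, hy, -⟩ := hrel
    exfalso
    linarith [mul_pos hP hb', mul_pos hQ hb', mul_pos hP hP', mul_pos hQ hQ',
      mul_pos hP hQ', mul_pos hQ hP']
  · rw [hA0, hA1, hA2, hA3, combo4, show (0:ℝ×ℝ×ℝ) = ((0:ℝ),(0:ℝ),(0:ℝ)) from rfl,
      Prod.mk.injEq, Prod.mk.injEq] at hrel
    obtain ⟨hx, hy, -⟩ := hrel
    exfalso
    linarith [mul_pos hP hb', mul_pos hQ hb', mul_pos hP hP', mul_pos hQ hQ',
      mul_pos hP hQ', mul_pos hQ hP']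
  · rw [hA0, hA1, hA2, hA3, combo4, show (0:ℝ×ℝ×ℝ) = ((0:ℝ),(0:ℝ),(0:ℝ)) from rfl,
      Prod.mk.injEq, Prod.mk.injEq] at hrel
    obtain ⟨hx, hy, -⟩ := hrel
    exfalso
    linarith [mul_pos hP hb', mul_pos hQ hb', mul_pos hP hP', mul_pos hQ hQ',
      mul_pos hP hQ', mul_pos hQ hP']
  · rw [hA0, hA1, hA2, hA3, combo4, show (0:ℝ×ℝ×ℝ) = ((0:ℝ),(0:ℝ),(0:ℝ)) from rfl,
      Prod.mk.injEq, Prod.mk.injEq] at hrel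
    obtain ⟨hx, hy, -⟩ := hrel
    exfalso
    linarith [mul_pos hP hb', mul_pos hQ hb', mul_pos hP hP', mul_pos hQ hQ',
      mul_pos hP hQ', mul_pos hQ hP']
  · rw [hA0, hA1, hA2, hA3, combo4, show (0:ℝ×ℝ×ℝ) = ((0:ℝ),(0:ℝ),(0:ℝ)) from rfl,
      Prod.mk.injEq, Prod.mk.injEq] at hrel
    obtain ⟨hx, -, -⟩ := hrel
    have hE1 : T (b • ((0:ℝ),(1:ℝ),(0:ℝ))) = b' • ((-(m':ℝ)),(1:ℝ),(0:ℝ)) := by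
      rw [hTd1, hA2, hA3, triple_sub, smul_triple, Prod.mk.injEq, Prod.mk.injEq]
      refine ⟨by linarith [hmb'], by ring, by ring⟩
    have hbb : b = b' := edge_eq T hTf hTb hb hb' _ _ he010 hemm' hu010 humm' hE1
    have hE2 : T (P • ((1:ℝ),(0:ℝ),(0:ℝ))) = P' • ((-1:ℝ),(0:ℝ),(0:ℝ)) := by
      rw [hTd2, hA1, hA2, triple_sub, smul_triple, Prod.mk.injEq, Prod.mk.injEq]
      norm_num
    have hPP : P = P' := edge_eq T hTf hTb hP hP' _ _ he100 hem100 hu100 hum100 hE2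
    have hQQ : Q = Q' := by
      have h2 : P * Q = P * Q' := by rw [← hPP] at hx; linarith [hx]
      exact mul_left_cancel₀ (ne_of_gt hP) h2
    left
    refine ⟨by linarith [hPdef, hQdef, hP'def, hQ'def], hbb, ?_⟩
    have h1 : (m:ℝ) * b = (m':ℝ) * b' := by linarith [hmb, hmb']
    rw [← hbb] at h1
    exact_mod_cast mul_right_cancel₀ (ne_of_gt hb) h1
end
end

section
/- Let m and m' be nonnegative integers with m ≠ m', and let a, b be real numbers with b > 0, a > (m/2)·b, and a > (m'/2)·b. Assume that b, a − (m/2)·b, and a − (m'/2)·b are all integers. Then there is no T ∈ GL(3,ℤ) with T(C(a,b,m)) = C(a,b,m'). In particular the cones C(a,b,m) and C(a,b,m') are not equivalent under any lattice-preserving linear automorphism of ℝ³. -/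
open Set

noncomputable section

set_option maxHeartbeats 2000000

lemma hirzTrap_eq (a b : ℝ) (m : ℕ) (hb : 0 < b) (ha : (m:ℝ)/2*b < a) :
    hirzTrap a b m =
      {uv : ℝ × ℝ | 0 ≤ uv.1 ∧ 0 ≤ uv.2 ∧ uv.2 ≤ b ∧
        uv.1 + (m:ℝ)*uv.2 ≤ a + (m:ℝ)/2*b} := by
  have hm : (0:ℝ) ≤ (m:ℝ) := Nat.cast_nonneg m
  apply le_antisymm
  · apply convexHull_min
    · rintro x hx
      simp only [mem_insert_iff, mem_singleton_iff] at hx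
      rcases hx with rfl | rfl | rfl | rfl <;>
        exact ⟨by simp <;> nlinarith, by simp <;> nlinarith,
          by simp <;> nlinarith, by simp <;> nlinarith⟩
    · intro x hx y hy u v hu hv huv
      obtain ⟨hx1, hx2, hx3, hx4⟩ := hx
      obtain ⟨hy1, hy2, hy3, hy4⟩ := hy
      have e1 : (u • x + v • y).1 = u * x.1 + v * y.1 := rfl
      have e2 : (u • x + v • y).2 = u * x.2 + v * y.2 := rfl
      have hb1 : u*b + v*b = b := by rw [← add_mul, huv, one_mul]
      have ha1 : u*(a + (m:ℝ)/2*b) + v*(a + (m:ℝ)/2*b) = a + (m:ℝ)/2*b := by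
        rw [← add_mul, huv, one_mul]
      refine ⟨?_, ?_, ?_, ?_⟩
      · simp only [e1]; exact add_nonneg (mul_nonneg hu hx1) (mul_nonneg hv hy1)
      · simp only [e2]; exact add_nonneg (mul_nonneg hu hx2) (mul_nonneg hv hy2)
      · simp only [e2]
        linarith [mul_le_mul_of_nonneg_left hx3 hu, mul_le_mul_of_nonneg_left hy3 hv, hb1]
      · simp only [e1, e2]
        linarith [mul_le_mul_of_nonneg_left hx4 hu, mul_le_mul_of_nonneg_left hy4 hv, ha1]
  · rintro ⟨u, v⟩ ⟨h1, h2, h3, h4⟩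
    simp only at h1 h2 h3 h4
    set p : ℝ := a - (m:ℝ)/2*b with hp
    set q : ℝ := a + (m:ℝ)/2*b with hq
    have hhull : Convex ℝ (hirzTrap a b m) := convex_convexHull ℝ _
    have hA : ((0:ℝ), (0:ℝ)) ∈ hirzTrap a b m := subset_convexHull ℝ _ (by simp)
    have hB : ((0:ℝ), b) ∈ hirzTrap a b m := subset_convexHull ℝ _ (by simp)
    have hC : (p, b) ∈ hirzTrap a b m := subset_convexHull ℝ _ (by simp [hirzTrap, hp])
    have hD : (q, (0:ℝ)) ∈ hirzTrap a b m := subset_convexHull ℝ _ (by simp [hirzTrap, hq])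
    have hs : 0 ≤ v/b := by positivity
    have hs' : 0 ≤ 1 - v/b := by
      rw [sub_nonneg, div_le_one hb]; exact h3
    have hsum : (1 - v/b) + v/b = 1 := by ring
    have hP1 : ((0:ℝ), v) ∈ hirzTrap a b m := by
      have h := hhull hA hB hs' hs hsum
      have : (1 - v/b) • (((0:ℝ), (0:ℝ)) : ℝ × ℝ) + (v/b) • ((0:ℝ), b) = ((0:ℝ), v) := by
        rw [Prod.ext_iff]
        constructor <;> simp [Prod.smul_def, smul_eq_mul] <;> field_simp
      rwa [this] at h
    have hP2 : ((q - (m:ℝ)*v), v) ∈ hirzTrap a b m := by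
      have h := hhull hD hC hs' hs hsum
      have : (1 - v/b) • ((q, (0:ℝ)) : ℝ × ℝ) + (v/b) • (p, b) = ((q - (m:ℝ)*v), v) := by
        rw [Prod.ext_iff]
        constructor <;> simp [Prod.smul_def, smul_eq_mul] <;> field_simp <;> ring
      rwa [this] at h
    have hqmv : u ≤ q - (m:ℝ)*v := by linarith
    have hqmv0 : 0 ≤ q - (m:ℝ)*v := le_trans h1 hqmv
    rcases eq_or_lt_of_le hqmv0 with heq | hlt
    · have hu0 : u = 0 := le_antisymm (by linarith) h1
      rw [hu0]; exact hP1
    · set θ : ℝ := u / (q - (m:ℝ)*v) with hθ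
      have hθ0 : 0 ≤ θ := by positivity
      have hθ1 : 0 ≤ 1 - θ := by
        rw [sub_nonneg, hθ, div_le_one hlt]; exact hqmv
      have h := hhull hP1 hP2 hθ1 hθ0 (by ring)
      have : (1 - θ) • (((0:ℝ), v) : ℝ × ℝ) + θ • ((q - (m:ℝ)*v), v) = (u, v) := by
        rw [Prod.ext_iff]
        constructor <;> simp [Prod.smul_def, smul_eq_mul, hθ] <;> field_simp <;> ring
      rwa [this] at h

def Cq (a b : ℝ) (m : ℕ) : Set (ℝ × ℝ × ℝ) :=
  {w | 0 ≤ w.1 ∧ 0 ≤ w.2.1 ∧ w.2.1 ≤ b * w.2.2 ∧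
    w.1 + (m:ℝ) * w.2.1 ≤ (a + (m:ℝ)/2*b) * w.2.2}

lemma hirzCone_eq (a b : ℝ) (m : ℕ) (hb : 0 < b) (ha : (m:ℝ)/2*b < a) :
    hirzCone a b m = Cq a b m := by
  have hm : (0:ℝ) ≤ (m:ℝ) := Nat.cast_nonneg m
  ext ⟨x, y, z⟩
  constructor
  · rintro ⟨t, ht, qq, hq, heq⟩
    rw [hirzTrap_eq a b m hb ha] at hq
    obtain ⟨h1, h2, h3, h4⟩ := hq
    rw [Prod.ext_iff, Prod.ext_iff] at heq
    obtain ⟨hx, hy, hz⟩ := heq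
    simp only at hx hy hz
    refine ⟨?_, ?_, ?_, ?_⟩ <;> simp only [Cq, mem_setOf_eq, hx, hy, hz]
    · exact mul_nonneg ht h1
    · exact mul_nonneg ht h2
    · nlinarith [mul_le_mul_of_nonneg_left h3 ht]
    · nlinarith [mul_le_mul_of_nonneg_left h4 ht]
  · rintro ⟨h1, h2, h3, h4⟩
    simp only at h1 h2 h3 h4
    have hz : 0 ≤ z := by nlinarith
    rcases eq_or_lt_of_le hz with heq | hlt
    · rw [← heq, mul_zero] at h3 h4
      have hy : y = 0 := le_antisymm h3 h2
      have hx : x = 0 := by nlinarith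
      refine ⟨0, le_refl 0, ((0:ℝ), (0:ℝ)), ?_, ?_⟩
      · rw [hirzTrap_eq a b m hb ha]
        refine ⟨le_refl 0, le_refl 0, hb.le, by nlinarith⟩
      · rw [Prod.ext_iff, Prod.ext_iff]
        exact ⟨by simp [hx], by simp [hy], by simp [heq.symm]⟩
    · refine ⟨z, hz, (x/z, y/z), ?_, ?_⟩
      · rw [hirzTrap_eq a b m hb ha]
        refine ⟨by positivity, by positivity, ?_, ?_⟩
        · show y / z ≤ b
          rw [div_le_iff₀ hlt]; nlinarith
        · show x / z + (m:ℝ) * (y / z) ≤ a + (m:ℝ)/2*b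
          rw [mul_div_assoc' _ _ _, ← add_div, div_le_iff₀ hlt]
          nlinarith
      · rw [Prod.ext_iff, Prod.ext_iff]
        refine ⟨by field_simp, by field_simp, rfl⟩

def IsExt (C : Set (ℝ × ℝ × ℝ)) (w : ℝ × ℝ × ℝ) : Prop :=
  w ∈ C ∧ w ≠ 0 ∧ ∀ u ∈ C, ∀ v ∈ C, w = u + v → ∃ c : ℝ, u = c • w

lemma mem_Cq (a b : ℝ) (m : ℕ) (x y z : ℝ) :
    ((x, y, z) : ℝ×ℝ×ℝ) ∈ Cq a b m ↔
      0 ≤ x ∧ 0 ≤ y ∧ y ≤ b * z ∧ x + (m:ℝ) * y ≤ (a + (m:ℝ)/2*b) * z := Iff.rfl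

lemma pert (a b : ℝ) (m : ℕ) (x y z ε d1 d2 : ℝ) (hz : z ≠ 0) (hε : 0 < ε)
    (hu : (((x+ε*d1)/2, (y+ε*d2)/2, z/2) : ℝ×ℝ×ℝ) ∈ Cq a b m)
    (hv : (((x-ε*d1)/2, (y-ε*d2)/2, z/2) : ℝ×ℝ×ℝ) ∈ Cq a b m)
    (hext : ∀ u ∈ Cq a b m, ∀ v ∈ Cq a b m,
      ((x,y,z) : ℝ×ℝ×ℝ) = u + v → ∃ c : ℝ, u = c • ((x,y,z) : ℝ×ℝ×ℝ)) :
    d1 = 0 ∧ d2 = 0 := by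
  obtain ⟨c, hc⟩ := hext _ hu _ hv (by
    rw [Prod.ext_iff, Prod.ext_iff]
    refine ⟨by simp; ring, by simp; ring, by simp⟩)
  rw [Prod.ext_iff, Prod.ext_iff] at hc
  obtain ⟨e1, e2, e3⟩ := hc
  simp only [Prod.smul_mk, smul_eq_mul] at e1 e2 e3
  have hc2 : c = 1/2 := by
    have : (c - 1/2) * z = 0 := by linarith [e3]
    rcases mul_eq_zero.1 this with h | h
    · linarith
    · exact absurd h hz
  rw [hc2] at e1 e2
  constructor
  · have : ε * d1 = 0 := by linarith
    rcases mul_eq_zero.1 this with h | h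
    · exact absurd h hε.ne'
    · exact h
  · have : ε * d2 = 0 := by linarith
    rcases mul_eq_zero.1 this with h | h
    · exact absurd h hε.ne'
    · exact h

lemma isExt_iff (a b : ℝ) (m : ℕ) (hb : 0 < b) (ha : (m:ℝ)/2*b < a) (w : ℝ × ℝ × ℝ) :
    IsExt (Cq a b m) w ↔ ∃ t : ℝ, 0 < t ∧
      (w = (0, 0, t) ∨ w = (0, t*b, t) ∨
       w = (t*(a - (m:ℝ)/2*b), t*b, t) ∨ w = (t*(a + (m:ℝ)/2*b), 0, t)) := by
  have hm : (0:ℝ) ≤ (m:ℝ) := Nat.cast_nonneg m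
  have hP0 : 0 < a - (m:ℝ)/2*b := by linarith
  have hQ0 : 0 < a + (m:ℝ)/2*b := by nlinarith
  constructor
  · rintro ⟨hmem, hw0, hext⟩
    obtain ⟨x, y, z⟩ := w
    obtain ⟨h1, h2, h3, h4⟩ := hmem
    simp only at h1 h2 h3 h4
    have hz0 : 0 ≤ z := by nlinarith
    have hz : 0 < z := by
      rcases eq_or_lt_of_le hz0 with heq | hlt
      · exfalso
        rw [← heq, mul_zero] at h3 h4
        have hy : y = 0 := le_antisymm h3 h2
        have hx : x = 0 := by nlinarith
        exact hw0 (by rw [Prod.ext_iff, Prod.ext_iff]; exact ⟨hx, hy, heq.symm⟩)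
      · exact hlt
    by_cases c1 : 0 < x ∧ x + (m:ℝ)*y < (a + (m:ℝ)/2*b)*z
    · exfalso
      obtain ⟨hx, hs⟩ := c1
      set ε : ℝ := min x ((a + (m:ℝ)/2*b)*z - x - (m:ℝ)*y) with hε
      have hε0 : 0 < ε := lt_min hx (by linarith)
      have hε1 : ε ≤ x := min_le_left _ _
      have hε2 : ε ≤ (a + (m:ℝ)/2*b)*z - x - (m:ℝ)*y := min_le_right _ _
      have := pert a b m x y z ε 1 0 hz.ne' hε0
        ⟨by simp; linarith, by simp; linarith, by simp; linarith, by simp; linarith⟩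
        ⟨by simp; linarith, by simp; linarith, by simp; linarith, by simp; linarith⟩
        hext
      exact one_ne_zero this.1
    by_cases c2 : 0 < y ∧ y < b*z ∧ x + (m:ℝ)*y < (a + (m:ℝ)/2*b)*z
    · exfalso
      obtain ⟨hy, hyz, hs⟩ := c2
      set ε : ℝ := min y (min (b*z - y) (((a + (m:ℝ)/2*b)*z - x - (m:ℝ)*y)/((m:ℝ)+1))) with hε
      have hε0 : 0 < ε :=
        lt_min hy (lt_min (by linarith) (div_pos (by linarith) (by positivity)))
      have hε1 : ε ≤ y := min_le_left _ _
      have hε2 : ε ≤ b*z - y := le_trans (min_le_right _ _) (min_le_left _ _)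
      have hε3 : ((m:ℝ)+1) * ε ≤ (a + (m:ℝ)/2*b)*z - x - (m:ℝ)*y := by
        have h : ε ≤ ((a + (m:ℝ)/2*b)*z - x - (m:ℝ)*y)/((m:ℝ)+1) :=
          le_trans (min_le_right _ _) (min_le_right _ _)
        rw [le_div_iff₀ (by positivity : (0:ℝ) < (m:ℝ)+1)] at h
        nlinarith
      have hεm : (m:ℝ)*ε ≤ (a + (m:ℝ)/2*b)*z - x - (m:ℝ)*y := by nlinarith
      have hme : 0 ≤ (m:ℝ)*ε := mul_nonneg hm hε0.le
      have := pert a b m x y z ε 0 1 hz.ne' hε0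
        ⟨by simp; linarith, by simp; linarith, by simp; linarith, by simp; linarith⟩
        ⟨by simp; linarith, by simp; linarith, by simp; linarith, by simp; linarith⟩
        hext
      exact one_ne_zero this.2
    by_cases c3 : 0 < x ∧ 0 < y ∧ y < b*z
    · exfalso
      obtain ⟨hx, hy, hyz⟩ := c3
      set ε : ℝ := min (x/((m:ℝ)+1)) (min y (b*z - y)) with hε
      have hε0 : 0 < ε := lt_min (by positivity) (lt_min hy (by linarith))
      have hε1 : ((m:ℝ)+1) * ε ≤ x := by
        have h := min_le_left (x/((m:ℝ)+1)) (min y (b*z - y))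
        rw [← hε, le_div_iff₀ (by positivity : (0:ℝ) < (m:ℝ)+1)] at h
        nlinarith
      have hεm : (m:ℝ)*ε ≤ x := by nlinarith
      have hε2 : ε ≤ y := le_trans (min_le_right _ _) (min_le_left _ _)
      have hε3 : ε ≤ b*z - y := le_trans (min_le_right _ _) (min_le_right _ _)
      have hme : 0 ≤ (m:ℝ)*ε := mul_nonneg hm hε0.le
      have := pert a b m x y z ε (-(m:ℝ)) 1 hz.ne' hε0
        ⟨by simp; linarith, by simp; linarith, by simp; linarith, by simp; linarith⟩
        ⟨by simp; linarith, by simp; linarith, by simp; linarith, by simp; linarith⟩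
        hext
      exact one_ne_zero this.2
    push_neg at c1 c2 c3
    have E1 : x = 0 ∨ x + (m:ℝ)*y = (a + (m:ℝ)/2*b)*z := by
      by_cases hx : 0 < x
      · exact Or.inr (le_antisymm h4 (c1 hx))
      · exact Or.inl (le_antisymm (not_lt.1 hx) h1)
    have myQ : (m:ℝ)*y = (a + (m:ℝ)/2*b)*z → False := by
      intro hmy
      have h5 : (m:ℝ)*y ≤ (m:ℝ)*(b*z) := mul_le_mul_of_nonneg_left h3 hm
      nlinarith [mul_pos (show (0:ℝ) < (a + (m:ℝ)/2*b) - (m:ℝ)*b by nlinarith) hz]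
    refine ⟨z, hz, ?_⟩
    rcases E1 with hx0 | hxq
    · by_cases hy : 0 < y
      · by_cases hyz : y < b*z
        · exfalso
          have hle := c2 hy hyz
          exact myQ (le_antisymm (by linarith) (by linarith))
        · right; left
          have : y = b*z := le_antisymm h3 (not_lt.1 hyz)
          rw [Prod.ext_iff, Prod.ext_iff]
          exact ⟨hx0, by rw [this]; ring, rfl⟩
      · left
        have hy0 : y = 0 := le_antisymm (not_lt.1 hy) h2
        rw [Prod.ext_iff, Prod.ext_iff]
        exact ⟨hx0, hy0, rfl⟩
    · by_cases hy : 0 < y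
      · by_cases hyz : y < b*z
        · exfalso
          by_cases hx : 0 < x
          · exact absurd hyz (not_lt.2 (c3 hx hy))
          · have hx0 : x = 0 := le_antisymm (not_lt.1 hx) h1
            rw [hx0, zero_add] at hxq
            exact myQ hxq
        · right; right; left
          have hybz : y = b*z := le_antisymm h3 (not_lt.1 hyz)
          rw [Prod.ext_iff, Prod.ext_iff]
          refine ⟨?_, by rw [hybz]; ring, rfl⟩
          rw [hybz] at hxq
          linarith
      · right; right; right
        have hy0 : y = 0 := le_antisymm (not_lt.1 hy) h2
        rw [hy0, mul_zero, add_zero] at hxq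
        rw [Prod.ext_iff, Prod.ext_iff]
        exact ⟨by rw [hxq]; ring, hy0, rfl⟩
  · rintro ⟨t, ht, rfl | rfl | rfl | rfl⟩
    · refine ⟨⟨le_refl 0, le_refl 0, by show (0:ℝ) ≤ b*t; positivity,
        by show (0:ℝ) + (m:ℝ)*0 ≤ (a + (m:ℝ)/2*b)*t; nlinarith⟩, ?_, ?_⟩
      · intro h; rw [Prod.ext_iff, Prod.ext_iff] at h; exact ht.ne' h.2.2
      · rintro ⟨u1, u2, u3⟩ ⟨hu1, hu2, hu3, hu4⟩ ⟨v1, v2, v3⟩ ⟨hv1, hv2, hv3, hv4⟩ hsum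
        simp only [Prod.mk_add_mk, Prod.mk.injEq] at hsum
        obtain ⟨s1, s2, s3⟩ := hsum
        have hu10 : u1 = 0 := by linarith
        have hu20 : u2 = 0 := by linarith
        refine ⟨u3/t, ?_⟩
        rw [Prod.ext_iff, Prod.ext_iff]
        refine ⟨by simpa using hu10, by simpa using hu20, by show u3 = u3/t*t; field_simp⟩
    · refine ⟨⟨le_refl 0, by show (0:ℝ) ≤ t*b; positivity,
        by show t*b ≤ b*t; linarith [mul_comm t b],
        by show (0:ℝ) + (m:ℝ)*(t*b) ≤ (a + (m:ℝ)/2*b)*t; nlinarith⟩, ?_, ?_⟩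
      · intro h; rw [Prod.ext_iff, Prod.ext_iff] at h; exact ht.ne' h.2.2
      · rintro ⟨u1, u2, u3⟩ ⟨hu1, hu2, hu3, hu4⟩ ⟨v1, v2, v3⟩ ⟨hv1, hv2, hv3, hv4⟩ hsum
        simp only [Prod.mk_add_mk, Prod.mk.injEq] at hsum
        obtain ⟨s1, s2, s3⟩ := hsum
        have hu10 : u1 = 0 := by linarith
        have hu2b : u2 = b * u3 := by nlinarith
        refine ⟨u3/t, ?_⟩
        rw [Prod.ext_iff, Prod.ext_iff]
        refine ⟨by simpa using hu10, by show u2 = u3/t*(t*b); rw [hu2b]; field_simp,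
          by show u3 = u3/t*t; field_simp⟩
    · refine ⟨⟨by show (0:ℝ) ≤ t*(a - (m:ℝ)/2*b); positivity, by show (0:ℝ) ≤ t*b; positivity,
        by show t*b ≤ b*t; linarith [mul_comm t b],
        by show t*(a - (m:ℝ)/2*b) + (m:ℝ)*(t*b) ≤ (a + (m:ℝ)/2*b)*t; nlinarith⟩, ?_, ?_⟩
      · intro h; rw [Prod.ext_iff, Prod.ext_iff] at h; exact ht.ne' h.2.2
      · rintro ⟨u1, u2, u3⟩ ⟨hu1, hu2, hu3, hu4⟩ ⟨v1, v2, v3⟩ ⟨hv1, hv2, hv3, hv4⟩ hsum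
        simp only [Prod.mk_add_mk, Prod.mk.injEq] at hsum
        obtain ⟨s1, s2, s3⟩ := hsum
        have hu2b : u2 = b * u3 := by nlinarith
        have hu1P : u1 = (a - (m:ℝ)/2*b) * u3 := by nlinarith
        refine ⟨u3/t, ?_⟩
        rw [Prod.ext_iff, Prod.ext_iff]
        refine ⟨by show u1 = u3/t*(t*(a - (m:ℝ)/2*b)); rw [hu1P]; field_simp,
          by show u2 = u3/t*(t*b); rw [hu2b]; field_simp,
          by show u3 = u3/t*t; field_simp⟩
    · refine ⟨⟨by show (0:ℝ) ≤ t*(a + (m:ℝ)/2*b); positivity, le_refl 0,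
        by show (0:ℝ) ≤ b*t; positivity,
        by show t*(a + (m:ℝ)/2*b) + (m:ℝ)*0 ≤ (a + (m:ℝ)/2*b)*t; nlinarith⟩, ?_, ?_⟩
      · intro h; rw [Prod.ext_iff, Prod.ext_iff] at h; exact ht.ne' h.2.2
      · rintro ⟨u1, u2, u3⟩ ⟨hu1, hu2, hu3, hu4⟩ ⟨v1, v2, v3⟩ ⟨hv1, hv2, hv3, hv4⟩ hsum
        simp only [Prod.mk_add_mk, Prod.mk.injEq] at hsum
        obtain ⟨s1, s2, s3⟩ := hsum
        have hu20 : u2 = 0 := by linarith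
        have hu1Q : u1 = (a + (m:ℝ)/2*b) * u3 := by nlinarith
        refine ⟨u3/t, ?_⟩
        rw [Prod.ext_iff, Prod.ext_iff]
        refine ⟨by show u1 = u3/t*(t*(a + (m:ℝ)/2*b)); rw [hu1Q]; field_simp,
          by simpa using hu20, by show u3 = u3/t*t; field_simp⟩

lemma finale (P Q P' Q' b : ℝ) (hP : 0 < P) (hQ : 0 < Q) (hP' : 0 < P') (hQ' : 0 < Q')
    (hb : 0 < b) (hPQ : P ≤ Q) (hPQ' : P' ≤ Q') (hsum : P + Q = P' + Q') (hne : P ≠ P')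
    (TA TB TC TD : ℝ × ℝ × ℝ)
    (hA : TA = ((0:ℝ), (0:ℝ), (1:ℝ)) ∨ TA = ((0:ℝ), b, (1:ℝ)) ∨ TA = ((P':ℝ), b, (1:ℝ)) ∨ TA = ((Q':ℝ), (0:ℝ), (1:ℝ)))
    (hB : TB = ((0:ℝ), (0:ℝ), (1:ℝ)) ∨ TB = ((0:ℝ), b, (1:ℝ)) ∨ TB = ((P':ℝ), b, (1:ℝ)) ∨ TB = ((Q':ℝ), (0:ℝ), (1:ℝ)))
    (hC : TC = ((0:ℝ), (0:ℝ), (1:ℝ)) ∨ TC = ((0:ℝ), b, (1:ℝ)) ∨ TC = ((P':ℝ), b, (1:ℝ)) ∨ TC = ((Q':ℝ), (0:ℝ), (1:ℝ)))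
    (hD : TD = ((0:ℝ), (0:ℝ), (1:ℝ)) ∨ TD = ((0:ℝ), b, (1:ℝ)) ∨ TD = ((P':ℝ), b, (1:ℝ)) ∨ TD = ((Q':ℝ), (0:ℝ), (1:ℝ)))
    (hAB : TA ≠ TB) (hAC : TA ≠ TC) (hAD : TA ≠ TD)
    (hBC : TB ≠ TC) (hBD : TB ≠ TD) (hCD : TC ≠ TD)
    (hrel : P • TD + Q • TB = P • TA + Q • TC) : False := by
  rcases hA with hA | hA | hA | hA <;> rcases hB with hB | hB | hB | hB <;>
    rcases hC with hC | hC | hC | hC <;> rcases hD with hD | hD | hD | hD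
  · -- case AAAA
    exact hAB (hA.trans hB.symm)
  · -- case AAAB
    exact hAB (hA.trans hB.symm)
  · -- case AAAC
    exact hAB (hA.trans hB.symm)
  · -- case AAAD
    exact hAB (hA.trans hB.symm)
  · -- case AABA
    exact hAB (hA.trans hB.symm)
  · -- case AABB
    exact hAB (hA.trans hB.symm)
  · -- case AABC
    exact hAB (hA.trans hB.symm)
  · -- case AABD
    exact hAB (hA.trans hB.symm)
  · -- case AACA
    exact hAB (hA.trans hB.symm)
  · -- case AACB
    exact hAB (hA.trans hB.symm)
  · -- case AACC
    exact hAB (hA.trans hB.symm)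
  · -- case AACD
    exact hAB (hA.trans hB.symm)
  · -- case AADA
    exact hAB (hA.trans hB.symm)
  · -- case AADB
    exact hAB (hA.trans hB.symm)
  · -- case AADC
    exact hAB (hA.trans hB.symm)
  · -- case AADD
    exact hAB (hA.trans hB.symm)
  · -- case ABAA
    exact hAC (hA.trans hC.symm)
  · -- case ABAB
    exact hAC (hA.trans hC.symm)
  · -- case ABAC
    exact hAC (hA.trans hC.symm)
  · -- case ABAD
    exact hAC (hA.trans hC.symm)
  · -- case ABBA
    exact hAD (hA.trans hD.symm)
  · -- case ABBB
    exact hBC (hB.trans hC.symm)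
  · -- case ABBC
    exact hBC (hB.trans hC.symm)
  · -- case ABBD
    exact hBC (hB.trans hC.symm)
  · -- case ABCA
    exact hAD (hA.trans hD.symm)
  · -- case ABCB
    exact hBD (hB.trans hD.symm)
  · -- case ABCC
    exact hCD (hC.trans hD.symm)
  · -- case ABCD
    rw [hA, hB, hC, hD] at hrel
    simp only [Prod.smul_mk, smul_eq_mul, Prod.mk_add_mk] at hrel
    rw [Prod.mk.injEq, Prod.mk.injEq] at hrel
    obtain ⟨e1, e2, -⟩ := hrel
    rcases lt_or_gt_of_ne hne with h | h <;>
      nlinarith [e1, hsum, hPQ, hPQ', hP, hQ, hP', hQ', h, mul_pos hP hQ', mul_pos hQ hP', mul_pos hP hP', mul_pos hQ hQ', mul_pos hP hQ, mul_pos hP' hQ']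
  · -- case ABDA
    exact hAD (hA.trans hD.symm)
  · -- case ABDB
    exact hBD (hB.trans hD.symm)
  · -- case ABDC
    rw [hA, hB, hC, hD] at hrel
    simp only [Prod.smul_mk, smul_eq_mul, Prod.mk_add_mk] at hrel
    rw [Prod.mk.injEq, Prod.mk.injEq] at hrel
    obtain ⟨e1, e2, -⟩ := hrel
    have k2 : P * 1 + Q * 1 = P * 0 + Q * 0 := mul_left_cancel₀ hb.ne' (by linear_combination e2)
    rcases lt_or_gt_of_ne hne with h | h <;>
      nlinarith [e1, hsum, hPQ, hPQ', hP, hQ, hP', hQ', h, mul_pos hP hQ', mul_pos hQ hP', mul_pos hP hP', mul_pos hQ hQ', mul_pos hP hQ, mul_pos hP' hQ', k2]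
  · -- case ABDD
    exact hCD (hC.trans hD.symm)
  · -- case ACAA
    exact hAC (hA.trans hC.symm)
  · -- case ACAB
    exact hAC (hA.trans hC.symm)
  · -- case ACAC
    exact hAC (hA.trans hC.symm)
  · -- case ACAD
    exact hAC (hA.trans hC.symm)
  · -- case ACBA
    exact hAD (hA.trans hD.symm)
  · -- case ACBB
    exact hCD (hC.trans hD.symm)
  · -- case ACBC
    exact hBD (hB.trans hD.symm)
  · -- case ACBD
    rw [hA, hB, hC, hD] at hrel
    simp only [Prod.smul_mk, smul_eq_mul, Prod.mk_add_mk] at hrel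
    rw [Prod.mk.injEq, Prod.mk.injEq] at hrel
    obtain ⟨e1, e2, -⟩ := hrel
    rcases lt_or_gt_of_ne hne with h | h <;>
      nlinarith [e1, hsum, hPQ, hPQ', hP, hQ, hP', hQ', h, mul_pos hP hQ', mul_pos hQ hP', mul_pos hP hP', mul_pos hQ hQ', mul_pos hP hQ, mul_pos hP' hQ']
  · -- case ACCA
    exact hAD (hA.trans hD.symm)
  · -- case ACCB
    exact hBC (hB.trans hC.symm)
  · -- case ACCC
    exact hBC (hB.trans hC.symm)
  · -- case ACCD
    exact hBC (hB.trans hC.symm)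
  · -- case ACDA
    exact hAD (hA.trans hD.symm)
  · -- case ACDB
    rw [hA, hB, hC, hD] at hrel
    simp only [Prod.smul_mk, smul_eq_mul, Prod.mk_add_mk] at hrel
    rw [Prod.mk.injEq, Prod.mk.injEq] at hrel
    obtain ⟨e1, e2, -⟩ := hrel
    have k2 : P * 1 + Q * 1 = P * 0 + Q * 0 := mul_left_cancel₀ hb.ne' (by linear_combination e2)
    rcases lt_or_gt_of_ne hne with h | h <;>
      nlinarith [e1, hsum, hPQ, hPQ', hP, hQ, hP', hQ', h, mul_pos hP hQ', mul_pos hQ hP', mul_pos hP hP', mul_pos hQ hQ', mul_pos hP hQ, mul_pos hP' hQ', k2]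
  · -- case ACDC
    exact hBD (hB.trans hD.symm)
  · -- case ACDD
    exact hCD (hC.trans hD.symm)
  · -- case ADAA
    exact hAC (hA.trans hC.symm)
  · -- case ADAB
    exact hAC (hA.trans hC.symm)
  · -- case ADAC
    exact hAC (hA.trans hC.symm)
  · -- case ADAD
    exact hAC (hA.trans hC.symm)
  · -- case ADBA
    exact hAD (hA.trans hD.symm)
  · -- case ADBB
    exact hCD (hC.trans hD.symm)
  · -- case ADBC
    rw [hA, hB, hC, hD] at hrel
    simp only [Prod.smul_mk, smul_eq_mul, Prod.mk_add_mk] at hrel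
    rw [Prod.mk.injEq, Prod.mk.injEq] at hrel
    obtain ⟨e1, e2, -⟩ := hrel
    have k2 : P * 1 + Q * 0 = P * 0 + Q * 1 := mul_left_cancel₀ hb.ne' (by linear_combination e2)
    rcases lt_or_gt_of_ne hne with h | h <;>
      nlinarith [e1, hsum, hPQ, hPQ', hP, hQ, hP', hQ', h, mul_pos hP hQ', mul_pos hQ hP', mul_pos hP hP', mul_pos hQ hQ', mul_pos hP hQ, mul_pos hP' hQ', k2]
  · -- case ADBD
    exact hBD (hB.trans hD.symm)
  · -- case ADCA
    exact hAD (hA.trans hD.symm)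
  · -- case ADCB
    rw [hA, hB, hC, hD] at hrel
    simp only [Prod.smul_mk, smul_eq_mul, Prod.mk_add_mk] at hrel
    rw [Prod.mk.injEq, Prod.mk.injEq] at hrel
    obtain ⟨e1, e2, -⟩ := hrel
    have k2 : P * 1 + Q * 0 = P * 0 + Q * 1 := mul_left_cancel₀ hb.ne' (by linear_combination e2)
    rcases lt_or_gt_of_ne hne with h | h <;>
      nlinarith [e1, hsum, hPQ, hPQ', hP, hQ, hP', hQ', h, mul_pos hP hQ', mul_pos hQ hP', mul_pos hP hP', mul_pos hQ hQ', mul_pos hP hQ, mul_pos hP' hQ', k2]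
  · -- case ADCC
    exact hCD (hC.trans hD.symm)
  · -- case ADCD
    exact hBD (hB.trans hD.symm)
  · -- case ADDA
    exact hAD (hA.trans hD.symm)
  · -- case ADDB
    exact hBC (hB.trans hC.symm)
  · -- case ADDC
    exact hBC (hB.trans hC.symm)
  · -- case ADDD
    exact hBC (hB.trans hC.symm)
  · -- case BAAA
    exact hBC (hB.trans hC.symm)
  · -- case BAAB
    exact hAD (hA.trans hD.symm)
  · -- case BAAC
    exact hBC (hB.trans hC.symm)
  · -- case BAAD
    exact hBC (hB.trans hC.symm)
  · -- case BABA
    exact hAC (hA.trans hC.symm)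
  · -- case BABB
    exact hAC (hA.trans hC.symm)
  · -- case BABC
    exact hAC (hA.trans hC.symm)
  · -- case BABD
    exact hAC (hA.trans hC.symm)
  · -- case BACA
    exact hBD (hB.trans hD.symm)
  · -- case BACB
    exact hAD (hA.trans hD.symm)
  · -- case BACC
    exact hCD (hC.trans hD.symm)
  · -- case BACD
    rw [hA, hB, hC, hD] at hrel
    simp only [Prod.smul_mk, smul_eq_mul, Prod.mk_add_mk] at hrel
    rw [Prod.mk.injEq, Prod.mk.injEq] at hrel
    obtain ⟨e1, e2, -⟩ := hrel
    have k2 : P * 0 + Q * 0 = P * 1 + Q * 1 := mul_left_cancel₀ hb.ne' (by linear_combination e2)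
    rcases lt_or_gt_of_ne hne with h | h <;>
      nlinarith [e1, hsum, hPQ, hPQ', hP, hQ, hP', hQ', h, mul_pos hP hQ', mul_pos hQ hP', mul_pos hP hP', mul_pos hQ hQ', mul_pos hP hQ, mul_pos hP' hQ', k2]
  · -- case BADA
    exact hBD (hB.trans hD.symm)
  · -- case BADB
    exact hAD (hA.trans hD.symm)
  · -- case BADC
    rw [hA, hB, hC, hD] at hrel
    simp only [Prod.smul_mk, smul_eq_mul, Prod.mk_add_mk] at hrel
    rw [Prod.mk.injEq, Prod.mk.injEq] at hrel
    obtain ⟨e1, e2, -⟩ := hrel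
    rcases lt_or_gt_of_ne hne with h | h <;>
      nlinarith [e1, hsum, hPQ, hPQ', hP, hQ, hP', hQ', h, mul_pos hP hQ', mul_pos hQ hP', mul_pos hP hP', mul_pos hQ hQ', mul_pos hP hQ, mul_pos hP' hQ']
  · -- case BADD
    exact hCD (hC.trans hD.symm)
  · -- case BBAA
    exact hAB (hA.trans hB.symm)
  · -- case BBAB
    exact hAB (hA.trans hB.symm)
  · -- case BBAC
    exact hAB (hA.trans hB.symm)
  · -- case BBAD
    exact hAB (hA.trans hB.symm)
  · -- case BBBA
    exact hAB (hA.trans hB.symm)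
  · -- case BBBB
    exact hAB (hA.trans hB.symm)
  · -- case BBBC
    exact hAB (hA.trans hB.symm)
  · -- case BBBD
    exact hAB (hA.trans hB.symm)
  · -- case BBCA
    exact hAB (hA.trans hB.symm)
  · -- case BBCB
    exact hAB (hA.trans hB.symm)
  · -- case BBCC
    exact hAB (hA.trans hB.symm)
  · -- case BBCD
    exact hAB (hA.trans hB.symm)
  · -- case BBDA
    exact hAB (hA.trans hB.symm)
  · -- case BBDB
    exact hAB (hA.trans hB.symm)
  · -- case BBDC
    exact hAB (hA.trans hB.symm)
  · -- case BBDD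
    exact hAB (hA.trans hB.symm)
  · -- case BCAA
    exact hCD (hC.trans hD.symm)
  · -- case BCAB
    exact hAD (hA.trans hD.symm)
  · -- case BCAC
    exact hBD (hB.trans hD.symm)
  · -- case BCAD
    rw [hA, hB, hC, hD] at hrel
    simp only [Prod.smul_mk, smul_eq_mul, Prod.mk_add_mk] at hrel
    rw [Prod.mk.injEq, Prod.mk.injEq] at hrel
    obtain ⟨e1, e2, -⟩ := hrel
    have k2 : P * 0 + Q * 1 = P * 1 + Q * 0 := mul_left_cancel₀ hb.ne' (by linear_combination e2)
    rcases lt_or_gt_of_ne hne with h | h <;>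
      nlinarith [e1, hsum, hPQ, hPQ', hP, hQ, hP', hQ', h, mul_pos hP hQ', mul_pos hQ hP', mul_pos hP hP', mul_pos hQ hQ', mul_pos hP hQ, mul_pos hP' hQ', k2]
  · -- case BCBA
    exact hAC (hA.trans hC.symm)
  · -- case BCBB
    exact hAC (hA.trans hC.symm)
  · -- case BCBC
    exact hAC (hA.trans hC.symm)
  · -- case BCBD
    exact hAC (hA.trans hC.symm)
  · -- case BCCA
    exact hBC (hB.trans hC.symm)
  · -- case BCCB
    exact hAD (hA.trans hD.symm)
  · -- case BCCC
    exact hBC (hB.trans hC.symm)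
  · -- case BCCD
    exact hBC (hB.trans hC.symm)
  · -- case BCDA
    rw [hA, hB, hC, hD] at hrel
    simp only [Prod.smul_mk, smul_eq_mul, Prod.mk_add_mk] at hrel
    rw [Prod.mk.injEq, Prod.mk.injEq] at hrel
    obtain ⟨e1, e2, -⟩ := hrel
    have k2 : P * 0 + Q * 1 = P * 1 + Q * 0 := mul_left_cancel₀ hb.ne' (by linear_combination e2)
    rcases lt_or_gt_of_ne hne with h | h <;>
      nlinarith [e1, hsum, hPQ, hPQ', hP, hQ, hP', hQ', h, mul_pos hP hQ', mul_pos hQ hP', mul_pos hP hP', mul_pos hQ hQ', mul_pos hP hQ, mul_pos hP' hQ', k2]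
  · -- case BCDB
    exact hAD (hA.trans hD.symm)
  · -- case BCDC
    exact hBD (hB.trans hD.symm)
  · -- case BCDD
    exact hCD (hC.trans hD.symm)
  · -- case BDAA
    exact hCD (hC.trans hD.symm)
  · -- case BDAB
    exact hAD (hA.trans hD.symm)
  · -- case BDAC
    rw [hA, hB, hC, hD] at hrel
    simp only [Prod.smul_mk, smul_eq_mul, Prod.mk_add_mk] at hrel
    rw [Prod.mk.injEq, Prod.mk.injEq] at hrel
    obtain ⟨e1, e2, -⟩ := hrel
    rcases lt_or_gt_of_ne hne with h | h <;>
      nlinarith [e1, hsum, hPQ, hPQ', hP, hQ, hP', hQ', h, mul_pos hP hQ', mul_pos hQ hP', mul_pos hP hP', mul_pos hQ hQ', mul_pos hP hQ, mul_pos hP' hQ']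
  · -- case BDAD
    exact hBD (hB.trans hD.symm)
  · -- case BDBA
    exact hAC (hA.trans hC.symm)
  · -- case BDBB
    exact hAC (hA.trans hC.symm)
  · -- case BDBC
    exact hAC (hA.trans hC.symm)
  · -- case BDBD
    exact hAC (hA.trans hC.symm)
  · -- case BDCA
    rw [hA, hB, hC, hD] at hrel
    simp only [Prod.smul_mk, smul_eq_mul, Prod.mk_add_mk] at hrel
    rw [Prod.mk.injEq, Prod.mk.injEq] at hrel
    obtain ⟨e1, e2, -⟩ := hrel
    have k2 : P * 0 + Q * 0 = P * 1 + Q * 1 := mul_left_cancel₀ hb.ne' (by linear_combination e2)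
    rcases lt_or_gt_of_ne hne with h | h <;>
      nlinarith [e1, hsum, hPQ, hPQ', hP, hQ, hP', hQ', h, mul_pos hP hQ', mul_pos hQ hP', mul_pos hP hP', mul_pos hQ hQ', mul_pos hP hQ, mul_pos hP' hQ', k2]
  · -- case BDCB
    exact hAD (hA.trans hD.symm)
  · -- case BDCC
    exact hCD (hC.trans hD.symm)
  · -- case BDCD
    exact hBD (hB.trans hD.symm)
  · -- case BDDA
    exact hBC (hB.trans hC.symm)
  · -- case BDDB
    exact hAD (hA.trans hD.symm)
  · -- case BDDC
    exact hBC (hB.trans hC.symm)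
  · -- case BDDD
    exact hBC (hB.trans hC.symm)
  · -- case CAAA
    exact hBC (hB.trans hC.symm)
  · -- case CAAB
    exact hBC (hB.trans hC.symm)
  · -- case CAAC
    exact hAD (hA.trans hD.symm)
  · -- case CAAD
    exact hBC (hB.trans hC.symm)
  · -- case CABA
    exact hBD (hB.trans hD.symm)
  · -- case CABB
    exact hCD (hC.trans hD.symm)
  · -- case CABC
    exact hAD (hA.trans hD.symm)
  · -- case CABD
    rw [hA, hB, hC, hD] at hrel
    simp only [Prod.smul_mk, smul_eq_mul, Prod.mk_add_mk] at hrel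
    rw [Prod.mk.injEq, Prod.mk.injEq] at hrel
    obtain ⟨e1, e2, -⟩ := hrel
    have k2 : P * 0 + Q * 0 = P * 1 + Q * 1 := mul_left_cancel₀ hb.ne' (by linear_combination e2)
    rcases lt_or_gt_of_ne hne with h | h <;>
      nlinarith [e1, hsum, hPQ, hPQ', hP, hQ, hP', hQ', h, mul_pos hP hQ', mul_pos hQ hP', mul_pos hP hP', mul_pos hQ hQ', mul_pos hP hQ, mul_pos hP' hQ', k2]
  · -- case CACA
    exact hAC (hA.trans hC.symm)
  · -- case CACB
    exact hAC (hA.trans hC.symm)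
  · -- case CACC
    exact hAC (hA.trans hC.symm)
  · -- case CACD
    exact hAC (hA.trans hC.symm)
  · -- case CADA
    exact hBD (hB.trans hD.symm)
  · -- case CADB
    rw [hA, hB, hC, hD] at hrel
    simp only [Prod.smul_mk, smul_eq_mul, Prod.mk_add_mk] at hrel
    rw [Prod.mk.injEq, Prod.mk.injEq] at hrel
    obtain ⟨e1, e2, -⟩ := hrel
    rcases lt_or_gt_of_ne hne with h | h <;>
      nlinarith [e1, hsum, hPQ, hPQ', hP, hQ, hP', hQ', h, mul_pos hP hQ', mul_pos hQ hP', mul_pos hP hP', mul_pos hQ hQ', mul_pos hP hQ, mul_pos hP' hQ']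
  · -- case CADC
    exact hAD (hA.trans hD.symm)
  · -- case CADD
    exact hCD (hC.trans hD.symm)
  · -- case CBAA
    exact hCD (hC.trans hD.symm)
  · -- case CBAB
    exact hBD (hB.trans hD.symm)
  · -- case CBAC
    exact hAD (hA.trans hD.symm)
  · -- case CBAD
    rw [hA, hB, hC, hD] at hrel
    simp only [Prod.smul_mk, smul_eq_mul, Prod.mk_add_mk] at hrel
    rw [Prod.mk.injEq, Prod.mk.injEq] at hrel
    obtain ⟨e1, e2, -⟩ := hrel
    have k2 : P * 0 + Q * 1 = P * 1 + Q * 0 := mul_left_cancel₀ hb.ne' (by linear_combination e2)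
    rcases lt_or_gt_of_ne hne with h | h <;>
      nlinarith [e1, hsum, hPQ, hPQ', hP, hQ, hP', hQ', h, mul_pos hP hQ', mul_pos hQ hP', mul_pos hP hP', mul_pos hQ hQ', mul_pos hP hQ, mul_pos hP' hQ', k2]
  · -- case CBBA
    exact hBC (hB.trans hC.symm)
  · -- case CBBB
    exact hBC (hB.trans hC.symm)
  · -- case CBBC
    exact hAD (hA.trans hD.symm)
  · -- case CBBD
    exact hBC (hB.trans hC.symm)
  · -- case CBCA
    exact hAC (hA.trans hC.symm)
  · -- case CBCB
    exact hAC (hA.trans hC.symm)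
  · -- case CBCC
    exact hAC (hA.trans hC.symm)
  · -- case CBCD
    exact hAC (hA.trans hC.symm)
  · -- case CBDA
    rw [hA, hB, hC, hD] at hrel
    simp only [Prod.smul_mk, smul_eq_mul, Prod.mk_add_mk] at hrel
    rw [Prod.mk.injEq, Prod.mk.injEq] at hrel
    obtain ⟨e1, e2, -⟩ := hrel
    have k2 : P * 0 + Q * 1 = P * 1 + Q * 0 := mul_left_cancel₀ hb.ne' (by linear_combination e2)
    rcases lt_or_gt_of_ne hne with h | h <;>
      nlinarith [e1, hsum, hPQ, hPQ', hP, hQ, hP', hQ', h, mul_pos hP hQ', mul_pos hQ hP', mul_pos hP hP', mul_pos hQ hQ', mul_pos hP hQ, mul_pos hP' hQ', k2]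
  · -- case CBDB
    exact hBD (hB.trans hD.symm)
  · -- case CBDC
    exact hAD (hA.trans hD.symm)
  · -- case CBDD
    exact hCD (hC.trans hD.symm)
  · -- case CCAA
    exact hAB (hA.trans hB.symm)
  · -- case CCAB
    exact hAB (hA.trans hB.symm)
  · -- case CCAC
    exact hAB (hA.trans hB.symm)
  · -- case CCAD
    exact hAB (hA.trans hB.symm)
  · -- case CCBA
    exact hAB (hA.trans hB.symm)
  · -- case CCBB
    exact hAB (hA.trans hB.symm)
  · -- case CCBC
    exact hAB (hA.trans hB.symm)
  · -- case CCBD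
    exact hAB (hA.trans hB.symm)
  · -- case CCCA
    exact hAB (hA.trans hB.symm)
  · -- case CCCB
    exact hAB (hA.trans hB.symm)
  · -- case CCCC
    exact hAB (hA.trans hB.symm)
  · -- case CCCD
    exact hAB (hA.trans hB.symm)
  · -- case CCDA
    exact hAB (hA.trans hB.symm)
  · -- case CCDB
    exact hAB (hA.trans hB.symm)
  · -- case CCDC
    exact hAB (hA.trans hB.symm)
  · -- case CCDD
    exact hAB (hA.trans hB.symm)
  · -- case CDAA
    exact hCD (hC.trans hD.symm)
  · -- case CDAB
    rw [hA, hB, hC, hD] at hrel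
    simp only [Prod.smul_mk, smul_eq_mul, Prod.mk_add_mk] at hrel
    rw [Prod.mk.injEq, Prod.mk.injEq] at hrel
    obtain ⟨e1, e2, -⟩ := hrel
    rcases lt_or_gt_of_ne hne with h | h <;>
      nlinarith [e1, hsum, hPQ, hPQ', hP, hQ, hP', hQ', h, mul_pos hP hQ', mul_pos hQ hP', mul_pos hP hP', mul_pos hQ hQ', mul_pos hP hQ, mul_pos hP' hQ']
  · -- case CDAC
    exact hAD (hA.trans hD.symm)
  · -- case CDAD
    exact hBD (hB.trans hD.symm)
  · -- case CDBA
    rw [hA, hB, hC, hD] at hrel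
    simp only [Prod.smul_mk, smul_eq_mul, Prod.mk_add_mk] at hrel
    rw [Prod.mk.injEq, Prod.mk.injEq] at hrel
    obtain ⟨e1, e2, -⟩ := hrel
    have k2 : P * 0 + Q * 0 = P * 1 + Q * 1 := mul_left_cancel₀ hb.ne' (by linear_combination e2)
    rcases lt_or_gt_of_ne hne with h | h <;>
      nlinarith [e1, hsum, hPQ, hPQ', hP, hQ, hP', hQ', h, mul_pos hP hQ', mul_pos hQ hP', mul_pos hP hP', mul_pos hQ hQ', mul_pos hP hQ, mul_pos hP' hQ', k2]
  · -- case CDBB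
    exact hCD (hC.trans hD.symm)
  · -- case CDBC
    exact hAD (hA.trans hD.symm)
  · -- case CDBD
    exact hBD (hB.trans hD.symm)
  · -- case CDCA
    exact hAC (hA.trans hC.symm)
  · -- case CDCB
    exact hAC (hA.trans hC.symm)
  · -- case CDCC
    exact hAC (hA.trans hC.symm)
  · -- case CDCD
    exact hAC (hA.trans hC.symm)
  · -- case CDDA
    exact hBC (hB.trans hC.symm)
  · -- case CDDB
    exact hBC (hB.trans hC.symm)
  · -- case CDDC
    exact hAD (hA.trans hD.symm)
  · -- case CDDD
    exact hBC (hB.trans hC.symm)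
  · -- case DAAA
    exact hBC (hB.trans hC.symm)
  · -- case DAAB
    exact hBC (hB.trans hC.symm)
  · -- case DAAC
    exact hBC (hB.trans hC.symm)
  · -- case DAAD
    exact hAD (hA.trans hD.symm)
  · -- case DABA
    exact hBD (hB.trans hD.symm)
  · -- case DABB
    exact hCD (hC.trans hD.symm)
  · -- case DABC
    rw [hA, hB, hC, hD] at hrel
    simp only [Prod.smul_mk, smul_eq_mul, Prod.mk_add_mk] at hrel
    rw [Prod.mk.injEq, Prod.mk.injEq] at hrel
    obtain ⟨e1, e2, -⟩ := hrel
    have k2 : P * 1 + Q * 0 = P * 0 + Q * 1 := mul_left_cancel₀ hb.ne' (by linear_combination e2)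
    rcases lt_or_gt_of_ne hne with h | h <;>
      nlinarith [e1, hsum, hPQ, hPQ', hP, hQ, hP', hQ', h, mul_pos hP hQ', mul_pos hQ hP', mul_pos hP hP', mul_pos hQ hQ', mul_pos hP hQ, mul_pos hP' hQ', k2]
  · -- case DABD
    exact hAD (hA.trans hD.symm)
  · -- case DACA
    exact hBD (hB.trans hD.symm)
  · -- case DACB
    rw [hA, hB, hC, hD] at hrel
    simp only [Prod.smul_mk, smul_eq_mul, Prod.mk_add_mk] at hrel
    rw [Prod.mk.injEq, Prod.mk.injEq] at hrel
    obtain ⟨e1, e2, -⟩ := hrel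
    have k2 : P * 1 + Q * 0 = P * 0 + Q * 1 := mul_left_cancel₀ hb.ne' (by linear_combination e2)
    rcases lt_or_gt_of_ne hne with h | h <;>
      nlinarith [e1, hsum, hPQ, hPQ', hP, hQ, hP', hQ', h, mul_pos hP hQ', mul_pos hQ hP', mul_pos hP hP', mul_pos hQ hQ', mul_pos hP hQ, mul_pos hP' hQ', k2]
  · -- case DACC
    exact hCD (hC.trans hD.symm)
  · -- case DACD
    exact hAD (hA.trans hD.symm)
  · -- case DADA
    exact hAC (hA.trans hC.symm)
  · -- case DADB
    exact hAC (hA.trans hC.symm)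
  · -- case DADC
    exact hAC (hA.trans hC.symm)
  · -- case DADD
    exact hAC (hA.trans hC.symm)
  · -- case DBAA
    exact hCD (hC.trans hD.symm)
  · -- case DBAB
    exact hBD (hB.trans hD.symm)
  · -- case DBAC
    rw [hA, hB, hC, hD] at hrel
    simp only [Prod.smul_mk, smul_eq_mul, Prod.mk_add_mk] at hrel
    rw [Prod.mk.injEq, Prod.mk.injEq] at hrel
    obtain ⟨e1, e2, -⟩ := hrel
    have k2 : P * 1 + Q * 1 = P * 0 + Q * 0 := mul_left_cancel₀ hb.ne' (by linear_combination e2)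
    rcases lt_or_gt_of_ne hne with h | h <;>
      nlinarith [e1, hsum, hPQ, hPQ', hP, hQ, hP', hQ', h, mul_pos hP hQ', mul_pos hQ hP', mul_pos hP hP', mul_pos hQ hQ', mul_pos hP hQ, mul_pos hP' hQ', k2]
  · -- case DBAD
    exact hAD (hA.trans hD.symm)
  · -- case DBBA
    exact hBC (hB.trans hC.symm)
  · -- case DBBB
    exact hBC (hB.trans hC.symm)
  · -- case DBBC
    exact hBC (hB.trans hC.symm)
  · -- case DBBD
    exact hAD (hA.trans hD.symm)
  · -- case DBCA
    rw [hA, hB, hC, hD] at hrel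
    simp only [Prod.smul_mk, smul_eq_mul, Prod.mk_add_mk] at hrel
    rw [Prod.mk.injEq, Prod.mk.injEq] at hrel
    obtain ⟨e1, e2, -⟩ := hrel
    rcases lt_or_gt_of_ne hne with h | h <;>
      nlinarith [e1, hsum, hPQ, hPQ', hP, hQ, hP', hQ', h, mul_pos hP hQ', mul_pos hQ hP', mul_pos hP hP', mul_pos hQ hQ', mul_pos hP hQ, mul_pos hP' hQ']
  · -- case DBCB
    exact hBD (hB.trans hD.symm)
  · -- case DBCC
    exact hCD (hC.trans hD.symm)
  · -- case DBCD
    exact hAD (hA.trans hD.symm)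
  · -- case DBDA
    exact hAC (hA.trans hC.symm)
  · -- case DBDB
    exact hAC (hA.trans hC.symm)
  · -- case DBDC
    exact hAC (hA.trans hC.symm)
  · -- case DBDD
    exact hAC (hA.trans hC.symm)
  · -- case DCAA
    exact hCD (hC.trans hD.symm)
  · -- case DCAB
    rw [hA, hB, hC, hD] at hrel
    simp only [Prod.smul_mk, smul_eq_mul, Prod.mk_add_mk] at hrel
    rw [Prod.mk.injEq, Prod.mk.injEq] at hrel
    obtain ⟨e1, e2, -⟩ := hrel
    have k2 : P * 1 + Q * 1 = P * 0 + Q * 0 := mul_left_cancel₀ hb.ne' (by linear_combination e2)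
    rcases lt_or_gt_of_ne hne with h | h <;>
      nlinarith [e1, hsum, hPQ, hPQ', hP, hQ, hP', hQ', h, mul_pos hP hQ', mul_pos hQ hP', mul_pos hP hP', mul_pos hQ hQ', mul_pos hP hQ, mul_pos hP' hQ', k2]
  · -- case DCAC
    exact hBD (hB.trans hD.symm)
  · -- case DCAD
    exact hAD (hA.trans hD.symm)
  · -- case DCBA
    rw [hA, hB, hC, hD] at hrel
    simp only [Prod.smul_mk, smul_eq_mul, Prod.mk_add_mk] at hrel
    rw [Prod.mk.injEq, Prod.mk.injEq] at hrel
    obtain ⟨e1, e2, -⟩ := hrel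
    rcases lt_or_gt_of_ne hne with h | h <;>
      nlinarith [e1, hsum, hPQ, hPQ', hP, hQ, hP', hQ', h, mul_pos hP hQ', mul_pos hQ hP', mul_pos hP hP', mul_pos hQ hQ', mul_pos hP hQ, mul_pos hP' hQ']
  · -- case DCBB
    exact hCD (hC.trans hD.symm)
  · -- case DCBC
    exact hBD (hB.trans hD.symm)
  · -- case DCBD
    exact hAD (hA.trans hD.symm)
  · -- case DCCA
    exact hBC (hB.trans hC.symm)
  · -- case DCCB
    exact hBC (hB.trans hC.symm)
  · -- case DCCC
    exact hBC (hB.trans hC.symm)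
  · -- case DCCD
    exact hAD (hA.trans hD.symm)
  · -- case DCDA
    exact hAC (hA.trans hC.symm)
  · -- case DCDB
    exact hAC (hA.trans hC.symm)
  · -- case DCDC
    exact hAC (hA.trans hC.symm)
  · -- case DCDD
    exact hAC (hA.trans hC.symm)
  · -- case DDAA
    exact hAB (hA.trans hB.symm)
  · -- case DDAB
    exact hAB (hA.trans hB.symm)
  · -- case DDAC
    exact hAB (hA.trans hB.symm)
  · -- case DDAD
    exact hAB (hA.trans hB.symm)
  · -- case DDBA
    exact hAB (hA.trans hB.symm)
  · -- case DDBB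
    exact hAB (hA.trans hB.symm)
  · -- case DDBC
    exact hAB (hA.trans hB.symm)
  · -- case DDBD
    exact hAB (hA.trans hB.symm)
  · -- case DDCA
    exact hAB (hA.trans hB.symm)
  · -- case DDCB
    exact hAB (hA.trans hB.symm)
  · -- case DDCC
    exact hAB (hA.trans hB.symm)
  · -- case DDCD
    exact hAB (hA.trans hB.symm)
  · -- case DDDA
    exact hAB (hA.trans hB.symm)
  · -- case DDDB
    exact hAB (hA.trans hB.symm)
  · -- case DDDC
    exact hAB (hA.trans hB.symm)
  · -- case DDDD
    exact hAB (hA.trans hB.symm)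

lemma isExt_iff' (a b : ℝ) (m : ℕ) (hb : 0 < b) (ha : (m:ℝ)/2*b < a) (v : ℝ × ℝ × ℝ) :
    IsExt (Cq a b m) v ↔ ∃ t : ℝ, 0 < t ∧ ∃ w : ℝ × ℝ × ℝ,
      (w = ((0:ℝ), (0:ℝ), (1:ℝ)) ∨ w = ((0:ℝ), b, (1:ℝ)) ∨
       w = ((a - (m:ℝ)/2*b), b, (1:ℝ)) ∨ w = ((a + (m:ℝ)/2*b), (0:ℝ), (1:ℝ))) ∧
      v = t • w := by
  rw [isExt_iff a b m hb ha]
  constructor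
  · rintro ⟨t, ht, h | h | h | h⟩
    · exact ⟨t, ht, _, Or.inl rfl, by rw [h]; rw [Prod.ext_iff, Prod.ext_iff]; simp⟩
    · exact ⟨t, ht, _, Or.inr (Or.inl rfl), by rw [h]; rw [Prod.ext_iff, Prod.ext_iff]; simp [mul_comm]⟩
    · exact ⟨t, ht, _, Or.inr (Or.inr (Or.inl rfl)), by rw [h]; rw [Prod.ext_iff, Prod.ext_iff]; simp [mul_comm]⟩
    · exact ⟨t, ht, _, Or.inr (Or.inr (Or.inr rfl)), by rw [h]; rw [Prod.ext_iff, Prod.ext_iff]; simp [mul_comm]⟩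
  · rintro ⟨t, ht, w, (rfl | rfl | rfl | rfl), rfl⟩
    · exact ⟨t, ht, Or.inl (by rw [Prod.ext_iff, Prod.ext_iff]; simp)⟩
    · exact ⟨t, ht, Or.inr (Or.inl (by rw [Prod.ext_iff, Prod.ext_iff]; simp [mul_comm]))⟩
    · exact ⟨t, ht, Or.inr (Or.inr (Or.inl (by rw [Prod.ext_iff, Prod.ext_iff]; simp [mul_comm])))⟩
    · exact ⟨t, ht, Or.inr (Or.inr (Or.inr (by rw [Prod.ext_iff, Prod.ext_iff]; simp [mul_comm])))⟩

lemma image_ext (T : (ℝ × ℝ × ℝ) ≃ₗ[ℝ] (ℝ × ℝ × ℝ)) (C C' : Set (ℝ × ℝ × ℝ))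
    (hTC : T '' C = C') (w : ℝ × ℝ × ℝ) (hw : IsExt C w) : IsExt C' (T w) := by
  obtain ⟨hmem, hne, hext⟩ := hw
  refine ⟨by rw [← hTC]; exact ⟨w, hmem, rfl⟩, ?_, ?_⟩
  · intro h
    exact hne (by simpa using congrArg T.symm (h.trans (map_zero T).symm))
  · intro u hu v hv hsum
    rw [← hTC] at hu hv
    obtain ⟨u₀, hu₀, rfl⟩ := hu
    obtain ⟨v₀, hv₀, rfl⟩ := hv
    have : w = u₀ + v₀ := T.injective (by rw [map_add]; exact hsum)
    obtain ⟨c, hc⟩ := hext u₀ hu₀ v₀ hv₀ this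
    exact ⟨c, by rw [hc, map_smul]⟩

lemma key (T : (ℝ × ℝ × ℝ) ≃ₗ[ℝ] (ℝ × ℝ × ℝ)) (a b : ℝ) (m m' : ℕ)
    (hb : 0 < b) (ha : (m:ℝ)/2*b < a) (ha' : (m':ℝ)/2*b < a)
    (hTC : T '' Cq a b m = Cq a b m')
    (hTCs : T.symm '' Cq a b m' = Cq a b m)
    (hTlat : T '' intLattice3 = intLattice3)
    (hTlats : T.symm '' intLattice3 = intLattice3)
    (hwlat : ∀ w : ℝ × ℝ × ℝ,
      (w = ((0:ℝ), (0:ℝ), (1:ℝ)) ∨ w = ((0:ℝ), b, (1:ℝ)) ∨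
       w = ((a - (m':ℝ)/2*b), b, (1:ℝ)) ∨ w = ((a + (m':ℝ)/2*b), (0:ℝ), (1:ℝ))) →
      w ∈ intLattice3)
    (v : ℝ × ℝ × ℝ) (hv : IsExt (Cq a b m) v) (hv3 : v.2.2 = 1) (hvlat : v ∈ intLattice3) :
    T v = ((0:ℝ), (0:ℝ), (1:ℝ)) ∨ T v = ((0:ℝ), b, (1:ℝ)) ∨
    T v = ((a - (m':ℝ)/2*b), b, (1:ℝ)) ∨ T v = ((a + (m':ℝ)/2*b), (0:ℝ), (1:ℝ)) := by
  obtain ⟨t, ht, w, hw, hTvw⟩ :=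
    (isExt_iff' a b m' hb ha' _).1 (image_ext T _ _ hTC v hv)
  have hw3 : w.2.2 = 1 := by rcases hw with rfl | rfl | rfl | rfl <;> rfl
  have hwext : IsExt (Cq a b m') w :=
    (isExt_iff' a b m' hb ha' _).2 ⟨1, one_pos, w, hw, (one_smul _ _).symm⟩
  obtain ⟨s, hs, u, hu, hTwu⟩ :=
    (isExt_iff' a b m hb ha _).1 (image_ext T.symm _ _ hTCs w hwext)
  have hu3 : u.2.2 = 1 := by rcases hu with rfl | rfl | rfl | rfl <;> rfl
  -- t is an integer ≥ 1
  have hTvlat : T v ∈ intLattice3 := by rw [← hTlat]; exact ⟨v, hvlat, rfl⟩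
  obtain ⟨k, hk⟩ := hTvlat
  have htk : t = (k.2.2 : ℝ) := by
    have h := congrArg (fun p : ℝ × ℝ × ℝ => p.2.2) (hTvw.symm.trans hk)
    simpa [Prod.smul_snd, smul_eq_mul, hw3] using h
  have ht1 : (1:ℝ) ≤ t := by
    have : (0:ℤ) < k.2.2 := by exact_mod_cast htk ▸ ht
    rw [htk]; exact_mod_cast this
  -- s is an integer ≥ 1
  have hTwlat : T.symm w ∈ intLattice3 := by rw [← hTlats]; exact ⟨w, hwlat w hw, rfl⟩
  obtain ⟨k', hk'⟩ := hTwlat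
  have hsk : s = (k'.2.2 : ℝ) := by
    have h := congrArg (fun p : ℝ × ℝ × ℝ => p.2.2) (hTwu.symm.trans hk')
    simpa [Prod.smul_snd, smul_eq_mul, hu3] using h
  have hs1 : (1:ℝ) ≤ s := by
    have : (0:ℤ) < k'.2.2 := by exact_mod_cast hsk ▸ hs
    rw [hsk]; exact_mod_cast this
  -- v = t • s • u, third coordinate gives t*s = 1
  have hcomb : v = t • (s • u) := by
    calc v = T.symm (T v) := (T.symm_apply_apply v).symm
    _ = T.symm (t • w) := by rw [hTvw]
    _ = t • T.symm w := map_smul T.symm t w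
    _ = t • (s • u) := by rw [hTwu]
  have hts : t * s = 1 := by
    have h := congrArg (fun p : ℝ × ℝ × ℝ => p.2.2) hcomb
    simp only [Prod.smul_snd, smul_eq_mul, hu3, hv3, mul_one] at h
    exact h.symm
  have ht1' : t = 1 := by nlinarith
  rw [ht1', one_smul] at hTvw
  rcases hw with rfl | rfl | rfl | rfl
  · exact Or.inl hTvw
  · exact Or.inr (Or.inl hTvw)
  · exact Or.inr (Or.inr (Or.inl hTvw))
  · exact Or.inr (Or.inr (Or.inr hTvw))

/-- If `m ≠ m'` then no lattice-preserving linear automorphism of `ℝ³`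
maps `C(a,b,m)` onto `C(a,b,m')`. -/
theorem hirzCone_not_GL3Z_equiv_of_ne (m m' : ℕ) (a b : ℝ)
    (hmm : m ≠ m')
    (hb : 0 < b) (ha : (m : ℝ)/2 * b < a) (ha' : (m' : ℝ)/2 * b < a)
    (hbZ : ∃ k : ℤ, b = k)
    (haZ : ∃ k : ℤ, a - (m : ℝ)/2 * b = k)
    (ha'Z : ∃ k : ℤ, a - (m' : ℝ)/2 * b = k) :
    ¬ ∃ T : (ℝ × ℝ × ℝ) ≃ₗ[ℝ] (ℝ × ℝ × ℝ),
        T '' intLattice3 = intLattice3 ∧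
        T '' hirzCone a b m = hirzCone a b m' := by
  rintro ⟨T, hTlat, hTcone⟩
  have hm : (0:ℝ) ≤ (m:ℝ) := Nat.cast_nonneg m
  have hm' : (0:ℝ) ≤ (m':ℝ) := Nat.cast_nonneg m'
  obtain ⟨bz, hbz⟩ := hbZ
  obtain ⟨pz, hpz⟩ := haZ
  obtain ⟨pz', hpz'⟩ := ha'Z
  have hTC : T '' Cq a b m = Cq a b m' := by
    rw [← hirzCone_eq a b m hb ha, ← hirzCone_eq a b m' hb ha']; exact hTcone
  have himg : ∀ S : Set (ℝ × ℝ × ℝ), T.symm '' (T '' S) = S := by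
    intro S
    rw [← Set.image_comp]
    simp [Function.comp]
  have hTCs : T.symm '' Cq a b m' = Cq a b m := by rw [← hTC, himg]
  have hTlats : T.symm '' intLattice3 = intLattice3 := by
    conv_lhs => rw [← hTlat]
    rw [himg]
  -- lattice membership of the m'-vertices
  have hwlat : ∀ w : ℝ × ℝ × ℝ,
      (w = ((0:ℝ), (0:ℝ), (1:ℝ)) ∨ w = ((0:ℝ), b, (1:ℝ)) ∨
       w = ((a - (m':ℝ)/2*b), b, (1:ℝ)) ∨ w = ((a + (m':ℝ)/2*b), (0:ℝ), (1:ℝ))) →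
      w ∈ intLattice3 := by
    rintro w (rfl | rfl | rfl | rfl)
    · exact ⟨(0, 0, 1), by norm_num⟩
    · exact ⟨(0, bz, 1), by norm_num [hbz]⟩
    · exact ⟨(pz', bz, 1), by rw [Prod.ext_iff, Prod.ext_iff]; exact ⟨hpz', hbz, by norm_num⟩⟩
    · refine ⟨(pz' + (m':ℤ) * bz, 0, 1), ?_⟩
      rw [Prod.ext_iff, Prod.ext_iff]
      refine ⟨?_, by norm_num, by norm_num⟩
      push_cast
      rw [← hpz', ← hbz]
      ring
  -- extremality and lattice membership of the m-vertices
  have extmem : ∀ v : ℝ × ℝ × ℝ,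
      (v = ((0:ℝ), (0:ℝ), (1:ℝ)) ∨ v = ((0:ℝ), b, (1:ℝ)) ∨
       v = ((a - (m:ℝ)/2*b), b, (1:ℝ)) ∨ v = ((a + (m:ℝ)/2*b), (0:ℝ), (1:ℝ))) →
      IsExt (Cq a b m) v ∧ v.2.2 = 1 ∧ v ∈ intLattice3 := by
    intro v hv
    refine ⟨(isExt_iff' a b m hb ha _).2 ⟨1, one_pos, v, hv, (one_smul _ _).symm⟩, ?_, ?_⟩
    · rcases hv with rfl | rfl | rfl | rfl <;> rfl
    · rcases hv with rfl | rfl | rfl | rfl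
      · exact ⟨(0, 0, 1), by norm_num⟩
      · exact ⟨(0, bz, 1), by norm_num [hbz]⟩
      · exact ⟨(pz, bz, 1), by rw [Prod.ext_iff, Prod.ext_iff]; exact ⟨hpz, hbz, by norm_num⟩⟩
      · refine ⟨(pz + (m:ℤ) * bz, 0, 1), ?_⟩
        rw [Prod.ext_iff, Prod.ext_iff]
        refine ⟨?_, by norm_num, by norm_num⟩
        push_cast
        rw [← hpz, ← hbz]
        ring
  obtain ⟨eA, e3A, lA⟩ := extmem _ (Or.inl rfl)
  obtain ⟨eB, e3B, lB⟩ := extmem _ (Or.inr (Or.inl rfl))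
  obtain ⟨eC, e3C, lC⟩ := extmem _ (Or.inr (Or.inr (Or.inl rfl)))
  obtain ⟨eD, e3D, lD⟩ := extmem _ (Or.inr (Or.inr (Or.inr rfl)))
  have hA := key T a b m m' hb ha ha' hTC hTCs hTlat hTlats hwlat _ eA e3A lA
  have hB := key T a b m m' hb ha ha' hTC hTCs hTlat hTlats hwlat _ eB e3B lB
  have hC := key T a b m m' hb ha ha' hTC hTCs hTlat hTlats hwlat _ eC e3C lC
  have hD := key T a b m m' hb ha ha' hTC hTCs hTlat hTlats hwlat _ eD e3D lD
  -- numerical facts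
  have hP : 0 < a - (m:ℝ)/2*b := by linarith
  have hQ : 0 < a + (m:ℝ)/2*b := by nlinarith
  have hP' : 0 < a - (m':ℝ)/2*b := by linarith
  have hQ' : 0 < a + (m':ℝ)/2*b := by nlinarith
  have hPQ : a - (m:ℝ)/2*b ≤ a + (m:ℝ)/2*b := by nlinarith
  have hPQ' : a - (m':ℝ)/2*b ≤ a + (m':ℝ)/2*b := by nlinarith
  have hsum : (a - (m:ℝ)/2*b) + (a + (m:ℝ)/2*b) = (a - (m':ℝ)/2*b) + (a + (m':ℝ)/2*b) := by ring
  have hne : a - (m:ℝ)/2*b ≠ a - (m':ℝ)/2*b := by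
    intro h
    apply hmm
    have h2 : (m:ℝ) * b = (m':ℝ) * b := by linarith
    have h3 : (m:ℝ) = (m':ℝ) := mul_right_cancel₀ hb.ne' h2
    exact_mod_cast h3
  -- distinctness of images
  have nAB : T ((0:ℝ), (0:ℝ), (1:ℝ)) ≠ T ((0:ℝ), b, (1:ℝ)) := fun h => by
    have h2 := T.injective h
    rw [Prod.ext_iff, Prod.ext_iff] at h2
    exact hb.ne' h2.2.1.symm
  have nAC : T ((0:ℝ), (0:ℝ), (1:ℝ)) ≠ T ((a - (m:ℝ)/2*b), b, (1:ℝ)) := fun h => by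
    have h2 := T.injective h
    rw [Prod.ext_iff, Prod.ext_iff] at h2
    exact hb.ne' h2.2.1.symm
  have nAD : T ((0:ℝ), (0:ℝ), (1:ℝ)) ≠ T ((a + (m:ℝ)/2*b), (0:ℝ), (1:ℝ)) := fun h => by
    have h2 := T.injective h
    rw [Prod.ext_iff, Prod.ext_iff] at h2
    exact hQ.ne' h2.1.symm
  have nBC : T ((0:ℝ), b, (1:ℝ)) ≠ T ((a - (m:ℝ)/2*b), b, (1:ℝ)) := fun h => by
    have h2 := T.injective h
    rw [Prod.ext_iff, Prod.ext_iff] at h2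
    exact hP.ne' h2.1.symm
  have nBD : T ((0:ℝ), b, (1:ℝ)) ≠ T ((a + (m:ℝ)/2*b), (0:ℝ), (1:ℝ)) := fun h => by
    have h2 := T.injective h
    rw [Prod.ext_iff, Prod.ext_iff] at h2
    exact hQ.ne' h2.1.symm
  have nCD : T ((a - (m:ℝ)/2*b), b, (1:ℝ)) ≠ T ((a + (m:ℝ)/2*b), (0:ℝ), (1:ℝ)) := fun h => by
    have h2 := T.injective h
    rw [Prod.ext_iff, Prod.ext_iff] at h2
    exact hb.ne' h2.2.1
  -- the transported relation
  have base : (a - (m:ℝ)/2*b) • (((a + (m:ℝ)/2*b), (0:ℝ), (1:ℝ)) : ℝ×ℝ×ℝ)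
      + (a + (m:ℝ)/2*b) • (((0:ℝ), b, (1:ℝ)) : ℝ×ℝ×ℝ)
      = (a - (m:ℝ)/2*b) • (((0:ℝ), (0:ℝ), (1:ℝ)) : ℝ×ℝ×ℝ)
      + (a + (m:ℝ)/2*b) • (((a - (m:ℝ)/2*b), b, (1:ℝ)) : ℝ×ℝ×ℝ) := by
    simp only [Prod.smul_mk, smul_eq_mul, Prod.mk_add_mk]
    rw [Prod.mk.injEq, Prod.mk.injEq]
    refine ⟨by ring, by ring, by ring⟩
  have hrel : (a - (m:ℝ)/2*b) • T ((a + (m:ℝ)/2*b), (0:ℝ), (1:ℝ))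
      + (a + (m:ℝ)/2*b) • T ((0:ℝ), b, (1:ℝ))
      = (a - (m:ℝ)/2*b) • T ((0:ℝ), (0:ℝ), (1:ℝ))
      + (a + (m:ℝ)/2*b) • T ((a - (m:ℝ)/2*b), b, (1:ℝ)) := by
    rw [← map_smul, ← map_smul, ← map_smul, ← map_smul, ← map_add, ← map_add, base]
  exact finale (a - (m:ℝ)/2*b) (a + (m:ℝ)/2*b) (a - (m':ℝ)/2*b) (a + (m':ℝ)/2*b) b
    hP hQ hP' hQ' hb hPQ hPQ' hsum hne _ _ _ _ hA hB hC hD nAB nAC nAD nBC nBD nCD hrel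
end
end

section
/- Let m be a nonnegative integer and a, b real numbers with b > 0 and a > (m/2)·b, and let w ∈ ℝ³ be nonzero. The ray R = { t·w : t ≥ 0 } is an extreme subset of the standard Hirzebruch cone C(a,b,m) if and only if w is a positive scalar multiple of one of the four vectors (0,0,1), (0,b,1), (a − (m/2)b, b, 1), (a + (m/2)b, 0, 1). -/
open Set

noncomputable section

lemma trapRep (a b : ℝ) (m : ℕ) :
    hirzTrap a b m = {q : ℝ × ℝ | ∃ u1 u2 u3 u4 : ℝ, 0 ≤ u1 ∧ 0 ≤ u2 ∧ 0 ≤ u3 ∧ 0 ≤ u4 ∧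
      u1 + u2 + u3 + u4 = 1 ∧
      q = u1 • (((0:ℝ), (0:ℝ)) : ℝ × ℝ) + u2 • (((0:ℝ), b) : ℝ × ℝ)
        + u3 • ((a - (m:ℝ)/2*b, b) : ℝ × ℝ) + u4 • ((a + (m:ℝ)/2*b, (0:ℝ)) : ℝ × ℝ)} := by
  apply Subset.antisymm
  · apply convexHull_min
    · rintro q (rfl | rfl | rfl | rfl)
      · exact ⟨1,0,0,0, by norm_num, by norm_num, by norm_num, by norm_num, by norm_num, by module⟩
      · exact ⟨0,1,0,0, by norm_num, by norm_num, by norm_num, by norm_num, by norm_num, by module⟩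
      · exact ⟨0,0,1,0, by norm_num, by norm_num, by norm_num, by norm_num, by norm_num, by module⟩
      · exact ⟨0,0,0,1, by norm_num, by norm_num, by norm_num, by norm_num, by norm_num, by module⟩
    · rintro x ⟨u1,u2,u3,u4,h1,h2,h3,h4,hs,rfl⟩ y ⟨w1,w2,w3,w4,g1,g2,g3,g4,gs,rfl⟩ α β hα hβ hαβ
      refine ⟨α*u1+β*w1, α*u2+β*w2, α*u3+β*w3, α*u4+β*w4, by positivity, by positivity,
        by positivity, by positivity, by nlinarith, by module⟩
  · rintro q ⟨u1,u2,u3,u4,h1,h2,h3,h4,hs,rfl⟩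
    have hconv : Convex ℝ (hirzTrap a b m) := convex_convexHull ℝ _
    have hmem : ∀ p ∈ ({((0:ℝ), (0:ℝ)), ((0:ℝ), b), (a - (m:ℝ)/2*b, b), (a + (m:ℝ)/2*b, (0:ℝ))} : Set (ℝ×ℝ)), p ∈ hirzTrap a b m :=
      fun p hp => subset_convexHull ℝ _ hp
    have := hconv.sum_mem (t := (Finset.univ : Finset (Fin 4)))
      (w := ![u1,u2,u3,u4]) (z := ![((0:ℝ), (0:ℝ)), ((0:ℝ), b), (a - (m:ℝ)/2*b, b), (a + (m:ℝ)/2*b, (0:ℝ))])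
      (by intro i _; fin_cases i <;> simpa)
      (by simp [Fin.sum_univ_four]; linarith)
      (by intro i _; fin_cases i <;> exact hmem _ (by simp))
    simpa [Fin.sum_univ_four] using this

lemma coneRep (a b : ℝ) (m : ℕ) :
    hirzCone a b m = {p : ℝ × ℝ × ℝ | ∃ l1 l2 l3 l4 : ℝ, 0 ≤ l1 ∧ 0 ≤ l2 ∧ 0 ≤ l3 ∧ 0 ≤ l4 ∧
      p = l1 • (((0:ℝ), (0:ℝ), (1:ℝ)) : ℝ × ℝ × ℝ) + l2 • (((0:ℝ), b, (1:ℝ)) : ℝ × ℝ × ℝ)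
        + l3 • ((a - (m:ℝ)/2*b, b, (1:ℝ)) : ℝ × ℝ × ℝ)
        + l4 • ((a + (m:ℝ)/2*b, (0:ℝ), (1:ℝ)) : ℝ × ℝ × ℝ)} := by
  ext p
  constructor
  · rintro ⟨t, ht, q, hq, rfl⟩
    rw [trapRep] at hq
    obtain ⟨u1,u2,u3,u4,h1,h2,h3,h4,hs,hq⟩ := hq
    refine ⟨t*u1, t*u2, t*u3, t*u4, by positivity, by positivity, by positivity, by positivity, ?_⟩
    have hq1 : q.1 = u3 * (a - (m:ℝ)/2*b) + u4 * (a + (m:ℝ)/2*b) := by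
      rw [hq]; simp [Prod.smul_def]; try ring
    have hq2 : q.2 = u1 * 0 + u2 * b + u3 * b := by
      rw [hq]; simp [Prod.smul_def]; try ring
    refine Prod.ext ?_ (Prod.ext ?_ ?_) <;>
      simp [hq1, hq2, Prod.smul_def] <;> ring_nf <;> nlinarith [hs]
  · rintro ⟨l1,l2,l3,l4,h1,h2,h3,h4,rfl⟩
    by_cases ht : l1 + l2 + l3 + l4 = 0
    · have e1 : l1 = 0 := by linarith
      have e2 : l2 = 0 := by linarith
      have e3 : l3 = 0 := by linarith
      have e4 : l4 = 0 := by linarith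
      refine ⟨0, le_refl 0, ((0:ℝ),(0:ℝ)), ?_, ?_⟩
      · rw [trapRep]; exact ⟨1,0,0,0, by norm_num, by norm_num, by norm_num, by norm_num, by norm_num, by module⟩
      · simp [e1,e2,e3,e4, Prod.smul_def]
        rfl
    · set t := l1 + l2 + l3 + l4 with htdef
      have htpos : 0 < t := lt_of_le_of_ne (by positivity) (Ne.symm ht)
      refine ⟨t, le_of_lt htpos, (l1/t) • (((0:ℝ),(0:ℝ)) : ℝ×ℝ) + (l2/t) • (((0:ℝ), b) : ℝ×ℝ)
        + (l3/t) • ((a - (m:ℝ)/2*b, b) : ℝ×ℝ) + (l4/t) • ((a + (m:ℝ)/2*b, (0:ℝ)) : ℝ×ℝ), ?_, ?_⟩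
      · rw [trapRep]
        exact ⟨l1/t, l2/t, l3/t, l4/t, by positivity, by positivity, by positivity, by positivity,
          by field_simp; linarith, rfl⟩
      · refine Prod.ext ?_ (Prod.ext ?_ ?_) <;> simp [Prod.smul_def]
        · field_simp
        · field_simp
        · exact htdef.symm

lemma ray_extreme_of_faces {V : Type*} [AddCommGroup V] [Module ℝ V] (C : Set V) (w : V)
    (f g : V → ℝ)
    (hf : ∀ (α β : ℝ) (x y : V), f (α • x + β • y) = α * f x + β * f y)
    (hg : ∀ (α β : ℝ) (x y : V), g (α • x + β • y) = α * g x + β * g y)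
    (hfC : ∀ p ∈ C, 0 ≤ f p) (hgC : ∀ p ∈ C, 0 ≤ g p)
    (hfw : f w = 0) (hgw : g w = 0)
    (hface : ∀ p ∈ C, f p = 0 → g p = 0 → ∃ t : ℝ, 0 ≤ t ∧ p = t • w)
    (hwC : ∀ t : ℝ, 0 ≤ t → t • w ∈ C) :
    IsExtreme ℝ C {p : V | ∃ t : ℝ, 0 ≤ t ∧ p = t • w} := by
  constructor
  · rintro p ⟨t, ht, rfl⟩; exact hwC t ht
  · rintro x hx y hy z ⟨t, ht, rfl⟩ ⟨α, β, hα, hβ, hαβ, hz⟩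
    have hfz : α * f x + β * f y = 0 := by
      rw [← hf]
      rw [hz]
      have : (t : ℝ) • w = t • w + (0:ℝ) • w := by module
      rw [this, hf, hfw]; ring
    have hgz : α * g x + β * g y = 0 := by
      rw [← hg, hz]
      have : (t : ℝ) • w = t • w + (0:ℝ) • w := by module
      rw [this, hg, hgw]; ring
    have hfx : f x = 0 := by
      have n1 := mul_nonneg hα.le (hfC x hx)
      have n2 := mul_nonneg hβ.le (hfC y hy)
      have : α * f x = 0 := by linarith
      have := mul_eq_zero.mp this
      rcases this with h | h
      · exact absurd h hα.ne'
      · exact h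
    have hfy : f y = 0 := by
      rw [hfx, mul_zero, zero_add] at hfz
      rcases mul_eq_zero.mp hfz with h | h
      · exact absurd h hβ.ne'
      · exact h
    have hgx : g x = 0 := by
      have n1 := mul_nonneg hα.le (hgC x hx)
      have n2 := mul_nonneg hβ.le (hgC y hy)
      have : α * g x = 0 := by linarith
      rcases mul_eq_zero.mp this with h | h
      · exact absurd h hα.ne'
      · exact h
    have hgy : g y = 0 := by
      rw [hgx, mul_zero, zero_add] at hgz
      rcases mul_eq_zero.mp hgz with h | h
      · exact absurd h hβ.ne'
      · exact h
    exact hface x hx hfx hgx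

lemma ray_par_of_extreme {V : Type*} [AddCommGroup V] [Module ℝ V] (C : Set V) (w v : V)
    (l : ℝ) (hl : 0 < l) (hv : v ≠ 0) (hx : w + l • v ∈ C) (hy : w - l • v ∈ C)
    (h : IsExtreme ℝ C {p : V | ∃ t : ℝ, 0 ≤ t ∧ p = t • w}) : ∃ r : ℝ, w = r • v := by
  have hwseg : w ∈ openSegment ℝ (w + l • v) (w - l • v) :=
    ⟨1/2, 1/2, by norm_num, by norm_num, by norm_num, by module⟩
  obtain ⟨t, ht, hxe⟩ := h.2 hx hy ⟨1, zero_le_one, (one_smul ℝ w).symm⟩ hwseg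
  by_cases hts : t = 1
  · exfalso
    apply hv
    rw [hts, one_smul] at hxe
    have hlv : l • v = 0 := by linear_combination (norm := module) hxe
    rcases smul_eq_zero.mp hlv with h | h
    · exact absurd h hl.ne'
    · exact h
  · have ht1 : t - 1 ≠ 0 := sub_ne_zero.mpr hts
    refine ⟨(t-1)⁻¹ * l, ?_⟩
    have h2 : l • v = (t - 1) • w := by linear_combination (norm := module) hxe
    calc w = (t-1)⁻¹ • ((t-1) • w) := by rw [inv_smul_smul₀ ht1]
    _ = (t-1)⁻¹ • (l • v) := by rw [h2]
    _ = ((t-1)⁻¹ * l) • v := by rw [smul_smul]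

lemma hirz_fwd (m : ℕ) (a b : ℝ) (hb : 0 < b) (ha : (m : ℝ)/2 * b < a)
    (w : ℝ × ℝ × ℝ) (hw : w ≠ 0)
    (h : IsExtreme ℝ (hirzCone a b m) {p : ℝ × ℝ × ℝ | ∃ t : ℝ, 0 ≤ t ∧ p = t • w}) :
      ∃ s : ℝ, 0 < s ∧
        (w = s • (((0:ℝ), (0:ℝ), (1:ℝ)) : ℝ × ℝ × ℝ) ∨
         w = s • (((0:ℝ), b, (1:ℝ)) : ℝ × ℝ × ℝ) ∨
         w = s • ((a - (m:ℝ)/2*b, b, (1:ℝ)) : ℝ × ℝ × ℝ) ∨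
         w = s • ((a + (m:ℝ)/2*b, (0:ℝ), (1:ℝ)) : ℝ × ℝ × ℝ)) := by
  have hc0 : (0:ℝ) ≤ (m:ℝ)/2*b := by positivity
  have hc1 : (0:ℝ) < a - (m:ℝ)/2*b := by linarith
  have hc2 : (0:ℝ) < a + (m:ℝ)/2*b := by linarith
  have hwC : w ∈ hirzCone a b m := h.1 ⟨1, zero_le_one, (one_smul ℝ w).symm⟩
  rw [coneRep] at hwC
  obtain ⟨l1, l2, l3, l4, h1, h2, h3, h4, hw_eq⟩ := hwC
  have k1 : 0 < l1 → ∃ r : ℝ, w = r • (((0:ℝ),(0:ℝ),(1:ℝ)) : ℝ×ℝ×ℝ) := fun hl =>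
    ray_par_of_extreme _ w _ l1 hl (by norm_num [Prod.ext_iff])
      (by rw [coneRep]; exact ⟨2*l1, l2, l3, l4, by linarith, h2, h3, h4,
        by linear_combination (norm := module) hw_eq⟩)
      (by rw [coneRep]; exact ⟨0, l2, l3, l4, le_refl 0, h2, h3, h4,
        by linear_combination (norm := module) hw_eq⟩) h
  have k2 : 0 < l2 → ∃ r : ℝ, w = r • (((0:ℝ), b, (1:ℝ)) : ℝ×ℝ×ℝ) := fun hl =>
    ray_par_of_extreme _ w _ l2 hl (by norm_num [Prod.ext_iff])
      (by rw [coneRep]; exact ⟨l1, 2*l2, l3, l4, h1, by linarith, h3, h4,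
        by linear_combination (norm := module) hw_eq⟩)
      (by rw [coneRep]; exact ⟨l1, 0, l3, l4, h1, le_refl 0, h3, h4,
        by linear_combination (norm := module) hw_eq⟩) h
  have k3 : 0 < l3 → ∃ r : ℝ, w = r • ((a - (m:ℝ)/2*b, b, (1:ℝ)) : ℝ×ℝ×ℝ) := fun hl =>
    ray_par_of_extreme _ w _ l3 hl (by norm_num [Prod.ext_iff])
      (by rw [coneRep]; exact ⟨l1, l2, 2*l3, l4, h1, h2, by linarith, h4,
        by linear_combination (norm := module) hw_eq⟩)
      (by rw [coneRep]; exact ⟨l1, l2, 0, l4, h1, h2, le_refl 0, h4,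
        by linear_combination (norm := module) hw_eq⟩) h
  have k4 : 0 < l4 → ∃ r : ℝ, w = r • ((a + (m:ℝ)/2*b, (0:ℝ), (1:ℝ)) : ℝ×ℝ×ℝ) := fun hl =>
    ray_par_of_extreme _ w _ l4 hl (by norm_num [Prod.ext_iff])
      (by rw [coneRep]; exact ⟨l1, l2, l3, 2*l4, h1, h2, h3, by linarith,
        by linear_combination (norm := module) hw_eq⟩)
      (by rw [coneRep]; exact ⟨l1, l2, l3, 0, h1, h2, h3, le_refl 0,
        by linear_combination (norm := module) hw_eq⟩) h
  have pair : ∀ v v' : ℝ×ℝ×ℝ, v.2.2 = 1 → v'.2.2 = 1 →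
      (∃ r : ℝ, w = r • v) → (∃ r : ℝ, w = r • v') → v = v' := by
    rintro v v' hv hv' ⟨r, rfl⟩ ⟨r', hr'⟩
    have hrne : r ≠ 0 := fun h0 => hw (by rw [h0, zero_smul])
    have h22 : r = r' := by
      have := congrArg (fun p : ℝ×ℝ×ℝ => p.2.2) hr'
      simpa [Prod.smul_def, hv, hv', smul_eq_mul] using this
    rw [← h22] at hr'
    exact smul_right_injective _ hrne hr'
  rcases h1.lt_or_eq with p1 | z1
  · have z2 : l2 = 0 := by
      by_contra hne
      have := pair _ _ rfl rfl (k1 p1) (k2 (lt_of_le_of_ne h2 (Ne.symm hne)))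
      simp [Prod.ext_iff] at this
      linarith
    have z3 : l3 = 0 := by
      by_contra hne
      have := pair _ _ rfl rfl (k1 p1) (k3 (lt_of_le_of_ne h3 (Ne.symm hne)))
      simp [Prod.ext_iff] at this
      linarith [this.1]
    have z4 : l4 = 0 := by
      by_contra hne
      have := pair _ _ rfl rfl (k1 p1) (k4 (lt_of_le_of_ne h4 (Ne.symm hne)))
      simp [Prod.ext_iff] at this
      linarith [this]
    refine ⟨l1, p1, Or.inl ?_⟩
    rw [hw_eq, z2, z3, z4]; module
  · rcases h2.lt_or_eq with p2 | z2
    · have z3 : l3 = 0 := by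
        by_contra hne
        have := pair _ _ rfl rfl (k2 p2) (k3 (lt_of_le_of_ne h3 (Ne.symm hne)))
        simp [Prod.ext_iff] at this
        linarith [this]
      have z4 : l4 = 0 := by
        by_contra hne
        have := pair _ _ rfl rfl (k2 p2) (k4 (lt_of_le_of_ne h4 (Ne.symm hne)))
        simp [Prod.ext_iff] at this
        linarith [this.2]
      refine ⟨l2, p2, Or.inr (Or.inl ?_)⟩
      rw [hw_eq, ← z1, z3, z4]; module
    · rcases h3.lt_or_eq with p3 | z3
      · have z4 : l4 = 0 := by
          by_contra hne
          have := pair _ _ rfl rfl (k3 p3) (k4 (lt_of_le_of_ne h4 (Ne.symm hne)))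
          simp [Prod.ext_iff] at this
          linarith [this.2]
        refine ⟨l3, p3, Or.inr (Or.inr (Or.inl ?_))⟩
        rw [hw_eq, ← z1, ← z2, z4]; module
      · rcases h4.lt_or_eq with p4 | z4
        · refine ⟨l4, p4, Or.inr (Or.inr (Or.inr ?_))⟩
          rw [hw_eq, ← z1, ← z2, ← z3]; module
        · exfalso
          apply hw
          rw [hw_eq, ← z1, ← z2, ← z3, ← z4]
          module

lemma hirz_bwd1 (m : ℕ) (a b : ℝ) (hb : 0 < b) (ha : (m : ℝ)/2 * b < a)
    (w : ℝ × ℝ × ℝ) (hw : w ≠ 0) (s : ℝ) (hs : 0 < s)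
    (hw_eq : w = s • (((0:ℝ), (0:ℝ), (1:ℝ)) : ℝ × ℝ × ℝ)) :
    IsExtreme ℝ (hirzCone a b m) {p : ℝ × ℝ × ℝ | ∃ t : ℝ, 0 ≤ t ∧ p = t • w} := by
  have hc0 : (0:ℝ) ≤ (m:ℝ)/2*b := by positivity
  have hc1 : (0:ℝ) < a - (m:ℝ)/2*b := by linarith
  have hc2 : (0:ℝ) < a + (m:ℝ)/2*b := by linarith
  apply ray_extreme_of_faces (hirzCone a b m) w (fun p => p.1) (fun p => p.2.1)
  · intro α β x y; simp [Prod.smul_def]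
  · intro α β x y; simp [Prod.smul_def]
  · intro p hp
    rw [coneRep] at hp
    obtain ⟨l1, l2, l3, l4, g1, g2, g3, g4, rfl⟩ := hp
    simp only [Prod.smul_def, Prod.fst_add, smul_eq_mul]
    nlinarith [mul_nonneg g3 hc1.le, mul_nonneg g4 hc2.le]
  · intro p hp
    rw [coneRep] at hp
    obtain ⟨l1, l2, l3, l4, g1, g2, g3, g4, rfl⟩ := hp
    simp only [Prod.smul_def, Prod.snd_add, Prod.fst_add, smul_eq_mul]
    nlinarith [mul_nonneg g2 hb.le, mul_nonneg g3 hb.le]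
  · rw [hw_eq]; simp
  · rw [hw_eq]; simp
  · intro p hp hf0 hg0
    rw [coneRep] at hp
    obtain ⟨l1, l2, l3, l4, g1, g2, g3, g4, rfl⟩ := hp
    simp only [Prod.smul_def, Prod.fst_add, Prod.snd_add, smul_eq_mul] at hf0 hg0
    have z3 : l3 = 0 := le_antisymm (by nlinarith [mul_nonneg g4 hc2.le]) g3
    have z4 : l4 = 0 := le_antisymm (by nlinarith [mul_nonneg g3 hc1.le]) g4
    have z2 : l2 = 0 := le_antisymm (by nlinarith [mul_nonneg g3 hb.le]) g2
    refine ⟨l1/s, by positivity, ?_⟩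
    rw [hw_eq, smul_smul, div_mul_cancel₀ _ hs.ne', z2, z3, z4]
    module
  · intro t ht
    rw [coneRep]
    exact ⟨t*s, 0, 0, 0, by positivity, le_refl 0, le_refl 0, le_refl 0, by rw [hw_eq]; module⟩

lemma hirz_bwd2 (m : ℕ) (a b : ℝ) (hb : 0 < b) (ha : (m : ℝ)/2 * b < a)
    (w : ℝ × ℝ × ℝ) (hw : w ≠ 0) (s : ℝ) (hs : 0 < s)
    (hw_eq : w = s • (((0:ℝ), b, (1:ℝ)) : ℝ × ℝ × ℝ)) :
    IsExtreme ℝ (hirzCone a b m) {p : ℝ × ℝ × ℝ | ∃ t : ℝ, 0 ≤ t ∧ p = t • w} := by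
  have hc0 : (0:ℝ) ≤ (m:ℝ)/2*b := by positivity
  have hc1 : (0:ℝ) < a - (m:ℝ)/2*b := by linarith
  have hc2 : (0:ℝ) < a + (m:ℝ)/2*b := by linarith
  apply ray_extreme_of_faces (hirzCone a b m) w (fun p => p.1) (fun p => b * p.2.2 - p.2.1)
  · intro α β x y; simp [Prod.smul_def]
  · intro α β x y; simp [Prod.smul_def]; ring
  · intro p hp
    rw [coneRep] at hp
    obtain ⟨l1, l2, l3, l4, g1, g2, g3, g4, rfl⟩ := hp
    simp only [Prod.smul_def, Prod.fst_add, smul_eq_mul]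
    nlinarith [mul_nonneg g3 hc1.le, mul_nonneg g4 hc2.le]
  · intro p hp
    rw [coneRep] at hp
    obtain ⟨l1, l2, l3, l4, g1, g2, g3, g4, rfl⟩ := hp
    simp only [Prod.smul_def, Prod.snd_add, Prod.fst_add, smul_eq_mul]
    nlinarith [mul_nonneg g1 hb.le, mul_nonneg g4 hb.le]
  · rw [hw_eq]; simp
  · rw [hw_eq]; simp [Prod.smul_def]; ring
  · intro p hp hf0 hg0
    rw [coneRep] at hp
    obtain ⟨l1, l2, l3, l4, g1, g2, g3, g4, rfl⟩ := hp
    simp only [Prod.smul_def, Prod.fst_add, Prod.snd_add, smul_eq_mul] at hf0 hg0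
    have z3 : l3 = 0 := le_antisymm (by nlinarith [mul_nonneg g4 hc2.le]) g3
    have z4 : l4 = 0 := le_antisymm (by nlinarith [mul_nonneg g3 hc1.le]) g4
    have z1 : l1 = 0 := le_antisymm (by nlinarith [mul_nonneg g4 hb.le]) g1
    refine ⟨l2/s, by positivity, ?_⟩
    rw [hw_eq, smul_smul, div_mul_cancel₀ _ hs.ne', z1, z3, z4]
    module
  · intro t ht
    rw [coneRep]
    exact ⟨0, t*s, 0, 0, le_refl 0, by positivity, le_refl 0, le_refl 0, by rw [hw_eq]; module⟩

lemma hirz_bwd3 (m : ℕ) (a b : ℝ) (hb : 0 < b) (ha : (m : ℝ)/2 * b < a)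
    (w : ℝ × ℝ × ℝ) (hw : w ≠ 0) (s : ℝ) (hs : 0 < s)
    (hw_eq : w = s • ((a - (m:ℝ)/2*b, b, (1:ℝ)) : ℝ × ℝ × ℝ)) :
    IsExtreme ℝ (hirzCone a b m) {p : ℝ × ℝ × ℝ | ∃ t : ℝ, 0 ≤ t ∧ p = t • w} := by
  have hc0 : (0:ℝ) ≤ (m:ℝ)/2*b := by positivity
  have hc1 : (0:ℝ) < a - (m:ℝ)/2*b := by linarith
  have hc2 : (0:ℝ) < a + (m:ℝ)/2*b := by linarith
  apply ray_extreme_of_faces (hirzCone a b m) w (fun p => b * p.2.2 - p.2.1)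
    (fun p => b*(a + (m:ℝ)/2*b) * p.2.2 - b * p.1 - 2*((m:ℝ)/2*b) * p.2.1)
  · intro α β x y; simp [Prod.smul_def]; ring
  · intro α β x y; simp [Prod.smul_def]; ring
  · intro p hp
    rw [coneRep] at hp
    obtain ⟨l1, l2, l3, l4, g1, g2, g3, g4, rfl⟩ := hp
    simp only [Prod.smul_def, Prod.snd_add, Prod.fst_add, smul_eq_mul]
    nlinarith [mul_nonneg g1 hb.le, mul_nonneg g4 hb.le]
  · intro p hp
    rw [coneRep] at hp
    obtain ⟨l1, l2, l3, l4, g1, g2, g3, g4, rfl⟩ := hp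
    simp only [Prod.smul_def, Prod.snd_add, Prod.fst_add, smul_eq_mul]
    nlinarith [mul_nonneg g1 (mul_nonneg hb.le hc2.le), mul_nonneg g2 (mul_nonneg hb.le hc1.le)]
  · rw [hw_eq]; simp [Prod.smul_def]; ring
  · rw [hw_eq]; simp [Prod.smul_def]; ring
  · intro p hp hf0 hg0
    rw [coneRep] at hp
    obtain ⟨l1, l2, l3, l4, g1, g2, g3, g4, rfl⟩ := hp
    simp only [Prod.smul_def, Prod.fst_add, Prod.snd_add, smul_eq_mul] at hf0 hg0
    have z1 : l1 = 0 := le_antisymm (by nlinarith [mul_nonneg g4 hb.le]) g1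
    have z4 : l4 = 0 := le_antisymm (by nlinarith [mul_nonneg g1 hb.le]) g4
    have z2 : l2 = 0 := le_antisymm
      (by nlinarith [mul_nonneg g1 (mul_nonneg hb.le hc2.le), mul_pos hb hc1]) g2
    refine ⟨l3/s, by positivity, ?_⟩
    rw [hw_eq, smul_smul, div_mul_cancel₀ _ hs.ne', z1, z2, z4]
    module
  · intro t ht
    rw [coneRep]
    exact ⟨0, 0, t*s, 0, le_refl 0, le_refl 0, by positivity, le_refl 0, by rw [hw_eq]; module⟩

lemma hirz_bwd4 (m : ℕ) (a b : ℝ) (hb : 0 < b) (ha : (m : ℝ)/2 * b < a)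
    (w : ℝ × ℝ × ℝ) (hw : w ≠ 0) (s : ℝ) (hs : 0 < s)
    (hw_eq : w = s • ((a + (m:ℝ)/2*b, (0:ℝ), (1:ℝ)) : ℝ × ℝ × ℝ)) :
    IsExtreme ℝ (hirzCone a b m) {p : ℝ × ℝ × ℝ | ∃ t : ℝ, 0 ≤ t ∧ p = t • w} := by
  have hc0 : (0:ℝ) ≤ (m:ℝ)/2*b := by positivity
  have hc1 : (0:ℝ) < a - (m:ℝ)/2*b := by linarith
  have hc2 : (0:ℝ) < a + (m:ℝ)/2*b := by linarith
  apply ray_extreme_of_faces (hirzCone a b m) w (fun p => p.2.1)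
    (fun p => b*(a + (m:ℝ)/2*b) * p.2.2 - b * p.1 - 2*((m:ℝ)/2*b) * p.2.1)
  · intro α β x y; simp [Prod.smul_def]
  · intro α β x y; simp [Prod.smul_def]; ring
  · intro p hp
    rw [coneRep] at hp
    obtain ⟨l1, l2, l3, l4, g1, g2, g3, g4, rfl⟩ := hp
    simp only [Prod.smul_def, Prod.snd_add, Prod.fst_add, smul_eq_mul]
    nlinarith [mul_nonneg g2 hb.le, mul_nonneg g3 hb.le]
  · intro p hp
    rw [coneRep] at hp
    obtain ⟨l1, l2, l3, l4, g1, g2, g3, g4, rfl⟩ := hp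
    simp only [Prod.smul_def, Prod.snd_add, Prod.fst_add, smul_eq_mul]
    nlinarith [mul_nonneg g1 (mul_nonneg hb.le hc2.le), mul_nonneg g2 (mul_nonneg hb.le hc1.le)]
  · rw [hw_eq]; simp
  · rw [hw_eq]; simp [Prod.smul_def]; ring
  · intro p hp hf0 hg0
    rw [coneRep] at hp
    obtain ⟨l1, l2, l3, l4, g1, g2, g3, g4, rfl⟩ := hp
    simp only [Prod.smul_def, Prod.fst_add, Prod.snd_add, smul_eq_mul] at hf0 hg0
    have z2 : l2 = 0 := le_antisymm (by nlinarith [mul_nonneg g3 hb.le]) g2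
    have z3 : l3 = 0 := le_antisymm (by nlinarith [mul_nonneg g2 hb.le]) g3
    have z1 : l1 = 0 := le_antisymm
      (by nlinarith [mul_nonneg g2 (mul_nonneg hb.le hc1.le), mul_pos hb hc2]) g1
    refine ⟨l4/s, by positivity, ?_⟩
    rw [hw_eq, smul_smul, div_mul_cancel₀ _ hs.ne', z1, z2, z3]
    module
  · intro t ht
    rw [coneRep]
    exact ⟨0, 0, 0, t*s, le_refl 0, le_refl 0, le_refl 0, by positivity, by rw [hw_eq]; module⟩

/-- For `w ≠ 0`, the ray `{t • w : t ≥ 0}` is an extreme subset of the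
cone `C(a,b,m)` iff `w` is a positive multiple of one of the four vectors
`(0,0,1)`, `(0,b,1)`, `(a − (m/2)b, b, 1)`, `(a + (m/2)b, 0, 1)`. -/
theorem hirzCone_extreme_ray_iff (m : ℕ) (a b : ℝ) (hb : 0 < b) (ha : (m : ℝ)/2 * b < a)
    (w : ℝ × ℝ × ℝ) (hw : w ≠ 0) :
    IsExtreme ℝ (hirzCone a b m) {p : ℝ × ℝ × ℝ | ∃ t : ℝ, 0 ≤ t ∧ p = t • w} ↔
      ∃ s : ℝ, 0 < s ∧
        (w = s • (((0:ℝ), (0:ℝ), (1:ℝ)) : ℝ × ℝ × ℝ) ∨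
         w = s • (((0:ℝ), b, (1:ℝ)) : ℝ × ℝ × ℝ) ∨
         w = s • ((a - (m:ℝ)/2*b, b, (1:ℝ)) : ℝ × ℝ × ℝ) ∨
         w = s • ((a + (m:ℝ)/2*b, (0:ℝ), (1:ℝ)) : ℝ × ℝ × ℝ)) := by
  constructor
  · exact hirz_fwd m a b hb ha w hw
  · rintro ⟨s, hs, hw_eq | hw_eq | hw_eq | hw_eq⟩
    · exact hirz_bwd1 m a b hb ha w hw s hs hw_eq
    · exact hirz_bwd2 m a b hb ha w hw s hs hw_eq
    · exact hirz_bwd3 m a b hb ha w hw s hs hw_eq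
    · exact hirz_bwd4 m a b hb ha w hw s hs hw_eq
end
end
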